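/- arXiv:1105.4198 — 9 statements merged into one kernel-verified Lean document; each statement's English description precedes it below -/
import Mathlib

section
/- Let a, b, c, A, B, C be nonnegative real numbers with c > 0 or C > 0. Then √(a² + A²) + √(b² + B²) − √(c² + C²) ≥ ((a + b − c)·c + (A + B − C)·C) / √(c² + C²). -/
/-! By Cauchy–Schwarz, `√(a² + A²)` and `√(b² + B²)` are at least the components of `(a, A)` and
`(b, B)` along the unit vector `(c, C) / √(c² + C²)`; the right-hand side is the sum of these
components minus `√(c² + C²) = (c² + C²) / √(c² + C²)`. -/

lemma mul_add_mul_le_sqrt_mul_sqrt (x y u v : ℝ) :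
    x * u + y * v ≤ √(x ^ 2 + y ^ 2) * √(u ^ 2 + v ^ 2) := by
  simpa [Fin.sum_univ_two] using Real.sum_mul_le_sqrt_mul_sqrt Finset.univ ![x, y] ![u, v]

lemma mul_add_mul_div_sqrt_le_sqrt (x y u v : ℝ) :
    (x * u + y * v) / √(u ^ 2 + v ^ 2) ≤ √(x ^ 2 + y ^ 2) :=
  div_le_of_le_mul₀ (Real.sqrt_nonneg _) (Real.sqrt_nonneg _) (mul_add_mul_le_sqrt_mul_sqrt x y u v)

theorem sqrt_sum_sq_defect_ge_general
    (a b c A B C : ℝ) (hpos : 0 < c ∨ 0 < C) :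
    Real.sqrt (a ^ 2 + A ^ 2) + Real.sqrt (b ^ 2 + B ^ 2) - Real.sqrt (c ^ 2 + C ^ 2) ≥
      ((a + b - c) * c + (A + B - C) * C) / Real.sqrt (c ^ 2 + C ^ 2) := by
  have hcC : 0 < c ^ 2 + C ^ 2 := by rcases hpos with h | h <;> positivity
  have hsplit : ((a + b - c) * c + (A + B - C) * C) / √(c ^ 2 + C ^ 2) =
      (a * c + A * C) / √(c ^ 2 + C ^ 2) + (b * c + B * C) / √(c ^ 2 + C ^ 2)
        - √(c ^ 2 + C ^ 2) := by
    field_simp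
    rw [Real.sq_sqrt hcC.le]
    ring
  rw [ge_iff_le, hsplit]
  gcongr ?_ + ?_ - _
  · exact mul_add_mul_div_sqrt_le_sqrt a A c C
  · exact mul_add_mul_div_sqrt_le_sqrt b B c C

/-- Key elementary inequality comparing triangle defects of a map and its graph map. -/
theorem sqrt_sum_sq_defect_ge
    (a b c A B C : ℝ) (ha : 0 ≤ a) (hb : 0 ≤ b) (hc : 0 ≤ c)
    (hA : 0 ≤ A) (hB : 0 ≤ B) (hC : 0 ≤ C) (hpos : 0 < c ∨ 0 < C) :
    Real.sqrt (a ^ 2 + A ^ 2) + Real.sqrt (b ^ 2 + B ^ 2) - Real.sqrt (c ^ 2 + C ^ 2) ≥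
      ((a + b - c) * c + (A + B - C) * C) / Real.sqrt (c ^ 2 + C ^ 2) :=
  sqrt_sum_sq_defect_ge_general a b c A B C hpos
end

section
/- Let T be a metric space in which every pair of points is joined by a unique geodesic, and such that T is an ℝ-tree (any loop formed by concatenating geodesics is degenerate: for geodesics γ₁, γ₂, γ₃ forming a triangle with vertices a₁₂, a₁₃, a₂₃, one of the sides is contained in the union of the other two). Then any three closed balls B₁, B₂, B₃ in T that are geodesically convex and pairwise intersecting have a common point. -/
open Set Metric

/-! Pick `x ∈ B₀ ∩ B₁`, `y ∈ B₀ ∩ B₂`, `z ∈ B₁ ∩ B₂`. By the tree condition one side of the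
triangle `xyz`, say `[x, y]`, lies in the union of the other two, hence in `B₁ ∪ B₂` by
convexity, while it also lies in `B₀`. A segment is connected and meets both closed sets
`B₁ ∋ x` and `B₂ ∋ y`, so it meets `B₁ ∩ B₂`, and that point lies in all three balls. -/

lemma isPreconnected_image_Icc_of_dist_eq {T : Type*} [PseudoMetricSpace T] {γ : ℝ → T}
    {d : ℝ} (hγ : ∀ s ∈ Icc (0:ℝ) d, ∀ t ∈ Icc (0:ℝ) d, dist (γ s) (γ t) = |s - t|) :
    IsPreconnected (γ '' Icc (0:ℝ) d) := by
  have hlip : LipschitzOnWith 1 γ (Icc (0:ℝ) d) :=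
    LipschitzOnWith.of_dist_le_mul fun s hs t ht => by
      rw [hγ s hs t ht, NNReal.coe_one, one_mul, Real.dist_eq]
  exact isPreconnected_Icc.image γ hlip.continuousOn

section Segments

variable {T : Type*} [TopologicalSpace T] (geo : T → T → Set T)

def IsSegmentConvex (s : Set T) : Prop :=
  ∀ x ∈ s, ∀ y ∈ s, geo x y ⊆ s

variable {geo}

lemma inter_three_nonempty_of_segment_subset {P Q R : Set T} {x y z : T}
    (hseg : IsPreconnected (geo x y)) (hx : x ∈ geo x y) (hy : y ∈ geo x y)
    (hP : IsSegmentConvex geo P) (hQ : IsSegmentConvex geo Q) (hR : IsSegmentConvex geo R)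
    (hQc : IsClosed Q) (hRc : IsClosed R)
    (hxP : x ∈ P) (hxQ : x ∈ Q) (hyP : y ∈ P) (hyR : y ∈ R) (hzQ : z ∈ Q) (hzR : z ∈ R)
    (htri : geo x y ⊆ geo x z ∪ geo z y) :
    (P ∩ Q ∩ R).Nonempty := by
  have hcov : geo x y ⊆ Q ∪ R :=
    htri.trans (union_subset_union (hQ x hxQ z hzQ) (hR z hzR y hyR))
  obtain ⟨p, hp, hpQ, hpR⟩ := isPreconnected_closed_iff.1 hseg Q R hQc hRc hcov
    ⟨x, hx, hxQ⟩ ⟨y, hy, hyR⟩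
  exact ⟨p, ⟨hP x hxP y hyP hp, hpQ⟩, hpR⟩

end Segments

theorem helly_three_balls_in_tree_general
    {T : Type*} [MetricSpace T] (geo : T → T → Set T)
    (hgeo : ∀ a b : T, ∃ γ : ℝ → T, γ 0 = a ∧ γ (dist a b) = b ∧
      (∀ s ∈ Icc (0:ℝ) (dist a b), ∀ t ∈ Icc (0:ℝ) (dist a b),
        dist (γ s) (γ t) = |s - t|) ∧
      geo a b = γ '' Icc (0:ℝ) (dist a b))
    (htree : ∀ a b c : T,
      geo a b ⊆ geo a c ∪ geo c b ∨ geo a c ⊆ geo a b ∪ geo b c ∨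
        geo b c ⊆ geo b a ∪ geo a c)
    (c : Fin 3 → T) (r : Fin 3 → ℝ)
    (hconv : ∀ i, ∀ x ∈ closedBall (c i) (r i), ∀ y ∈ closedBall (c i) (r i),
      geo x y ⊆ closedBall (c i) (r i))
    (hpair : ∀ i j, (closedBall (c i) (r i) ∩ closedBall (c j) (r j)).Nonempty) :
    (closedBall (c 0) (r 0) ∩ closedBall (c 1) (r 1) ∩ closedBall (c 2) (r 2)).Nonempty := by
  have hseg : ∀ a b, IsPreconnected (geo a b) ∧ a ∈ geo a b ∧ b ∈ geo a b := fun a b => by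
    obtain ⟨γ, h0, hd, hγ, hab⟩ := hgeo a b
    refine ⟨hab ▸ isPreconnected_image_Icc_of_dist_eq hγ, ?_, ?_⟩ <;> rw [hab]
    exacts [⟨0, left_mem_Icc.2 dist_nonneg, h0⟩, ⟨dist a b, right_mem_Icc.2 dist_nonneg, hd⟩]
  have hclosed : ∀ i, IsClosed (closedBall (c i) (r i)) := fun _ => isClosed_closedBall
  obtain ⟨x, hx0, hx1⟩ := hpair 0 1
  obtain ⟨y, hy0, hy2⟩ := hpair 0 2
  obtain ⟨z, hz1, hz2⟩ := hpair 1 2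
  rcases htree x y z with h | h | h
  · exact inter_three_nonempty_of_segment_subset (hseg x y).1 (hseg x y).2.1 (hseg x y).2.2
      (hconv 0) (hconv 1) (hconv 2) (hclosed 1) (hclosed 2) hx0 hx1 hy0 hy2 hz1 hz2 h
  · obtain ⟨p, ⟨hp1, hp0⟩, hp2⟩ := inter_three_nonempty_of_segment_subset (hseg x z).1
      (hseg x z).2.1 (hseg x z).2.2 (hconv 1) (hconv 0) (hconv 2) (hclosed 0) (hclosed 2)
      hx1 hx0 hz1 hz2 hy0 hy2 h
    exact ⟨p, ⟨hp0, hp1⟩, hp2⟩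
  · obtain ⟨p, ⟨hp2, hp0⟩, hp1⟩ := inter_three_nonempty_of_segment_subset (hseg y z).1
      (hseg y z).2.1 (hseg y z).2.2 (hconv 2) (hconv 0) (hconv 1) (hclosed 0) (hclosed 1)
      hy2 hy0 hz2 hz1 hx0 hx1 h
    exact ⟨p, ⟨hp0, hp1⟩, hp2⟩

/-- Helly property for three geodesically convex, pairwise intersecting closed balls
in an ℝ-tree: they have a common point.  Geodesics are encoded by a map `geo`
assigning to each pair of points its (unique) geodesic segment, parametrized
isometrically; the tree condition says that in any geodesic triangle one side is
contained in the union of the other two. -/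
theorem helly_three_balls_in_tree
    {T : Type*} [MetricSpace T] (geo : T → T → Set T)
    (hgeo : ∀ a b : T, ∃ γ : ℝ → T, γ 0 = a ∧ γ (dist a b) = b ∧
      (∀ s ∈ Icc (0:ℝ) (dist a b), ∀ t ∈ Icc (0:ℝ) (dist a b),
        dist (γ s) (γ t) = |s - t|) ∧
      geo a b = γ '' Icc (0:ℝ) (dist a b))
    (hsymm : ∀ a b, geo a b = geo b a)
    (htree : ∀ a b c : T,
      geo a b ⊆ geo a c ∪ geo c b ∨ geo a c ⊆ geo a b ∪ geo b c ∨
        geo b c ⊆ geo b a ∪ geo a c)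
    (c : Fin 3 → T) (r : Fin 3 → ℝ)
    (hconv : ∀ i, ∀ x ∈ closedBall (c i) (r i), ∀ y ∈ closedBall (c i) (r i),
      geo x y ⊆ closedBall (c i) (r i))
    (hpair : ∀ i j, (closedBall (c i) (r i) ∩ closedBall (c j) (r j)).Nonempty) :
    (closedBall (c 0) (r 0) ∩ closedBall (c 1) (r 1) ∩ closedBall (c 2) (r 2)).Nonempty :=
  helly_three_balls_in_tree_general geo hgeo htree c r hconv hpair
end

section
/- Let E ⊆ ℝⁿ, and suppose f : E → ℝ^D satisfies: for every dyadic cube Q intersecting E there is an affine map A_Q with |f(x) − A_Q(x)| < ρ·diam(Q) for all x ∈ 3Q ∩ E, the least singular value σ(A_Q') ≥ ε_σ and operator norm |A_Q'| ≤ M, where ρ < ε_σ/(12√n). Then f is bi-Lipschitz on E: for all distinct x, y ∈ E, (ε_σ/2)·|x−y| ≤ |f(x)−f(y)| ≤ (M + ε_σ/2)·|x−y|. -/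
/-!
On the dyadic cube `Q` containing `x` whose sidelength satisfies `|x - y| ≤ 2^j ≤ 2|x - y|`,
both `x` and `y` lie in `3Q`, so `f x - f y` differs from `A_Q' (x - y)` by less than
`2ρ√n·2^j ≤ (ε_σ/3)|x - y|`. The two-sided bounds on `A_Q'` then give the bi-Lipschitz bounds.
-/

open Metric

/-- The dyadic cube of sidelength `2^j` with lower corner `2^j • k`. -/
def dyadicCube (n : ℕ) (j : ℤ) (k : Fin n → ℤ) : Set (EuclideanSpace ℝ (Fin n)) :=
  {x | ∀ i, (k i : ℝ) * (2:ℝ) ^ j ≤ x i ∧ x i < ((k i : ℝ) + 1) * (2:ℝ) ^ j}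

/-- The center of the dyadic cube. -/
noncomputable def dyadicCenter (n : ℕ) (j : ℤ) (k : Fin n → ℤ) :
    EuclideanSpace ℝ (Fin n) :=
  (WithLp.equiv 2 (Fin n → ℝ)).symm fun i => ((k i : ℝ) + 1 / 2) * (2:ℝ) ^ j

/-- The concentric cube `3Q` with three times the sidelength. -/
noncomputable def dyadicTriple (n : ℕ) (j : ℤ) (k : Fin n → ℤ) :
    Set (EuclideanSpace ℝ (Fin n)) :=
  {x | ∀ i, |x i - dyadicCenter n j k i| ≤ (3 / 2) * (2:ℝ) ^ j}

theorem norm_sub_bounds_of_affine_approx {E F : Type*} [SeminormedAddCommGroup E]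
    [NormedSpace ℝ E] [SeminormedAddCommGroup F] [NormedSpace ℝ F]
    (T : E →L[ℝ] F) (b : F) {ε M δ : ℝ} (hT : ∀ v, ε * ‖v‖ ≤ ‖T v‖) (hTM : ‖T‖ ≤ M)
    {x y : E} {u w : F} (hx : ‖u - (T x + b)‖ ≤ δ) (hy : ‖w - (T y + b)‖ ≤ δ) :
    ε * ‖x - y‖ - 2 * δ ≤ ‖u - w‖ ∧ ‖u - w‖ ≤ M * ‖x - y‖ + 2 * δ := by
  set e := (u - (T x + b)) - (w - (T y + b))
  have hdecomp : u - w = T (x - y) + e := by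
    simp only [e, map_sub]; abel
  have he : ‖e‖ ≤ 2 * δ := by linarith [norm_sub_le (u - (T x + b)) (w - (T y + b))]
  rw [hdecomp]
  constructor
  · linarith [hT (x - y), norm_sub_le_norm_add (T (x - y)) e]
  · linarith [T.le_of_opNorm_le hTM (x - y), norm_add_le (T (x - y)) e]

theorem exists_zpow_two_mem_Icc {d : ℝ} (hd : 0 < d) :
    ∃ j : ℤ, (2 : ℝ) ^ j ∈ Set.Icc d (2 * d) := by
  obtain ⟨m, hlt, hle⟩ := exists_mem_Ioc_zpow hd one_lt_two
  refine ⟨m + 1, hle, ?_⟩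
  rw [zpow_add_one₀ two_ne_zero]
  linarith

theorem mem_dyadicCube_floor {n : ℕ} (j : ℤ) (x : EuclideanSpace ℝ (Fin n)) :
    x ∈ dyadicCube n j (fun i => ⌊x i / (2 : ℝ) ^ j⌋) := by
  intro i
  have h2j : (0 : ℝ) < 2 ^ j := zpow_pos two_pos j
  refine ⟨?_, ?_⟩
  · rw [← le_div_iff₀ h2j]; exact Int.floor_le _
  · rw [← div_lt_iff₀ h2j]; exact Int.lt_floor_add_one _

theorem mem_dyadicTriple_of_mem_dyadicCube {n : ℕ} {j : ℤ} {k : Fin n → ℤ}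
    {x y : EuclideanSpace ℝ (Fin n)} (hx : x ∈ dyadicCube n j k) (hxy : ‖y - x‖ ≤ 2 ^ j) :
    y ∈ dyadicTriple n j k := by
  intro i
  have hcenter : |x i - dyadicCenter n j k i| ≤ 1 / 2 * 2 ^ j := by
    have hc : dyadicCenter n j k i = ((k i : ℝ) + 1 / 2) * 2 ^ j := rfl
    rw [hc, abs_le]
    constructor <;> linarith [(hx i).1, (hx i).2]
  have hcoord : |y i - x i| ≤ 2 ^ j := by
    simpa using (PiLp.norm_apply_le (y - x) i).trans hxy
  calc |y i - dyadicCenter n j k i|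
      ≤ |y i - x i| + |x i - dyadicCenter n j k i| := abs_sub_le _ _ _
    _ ≤ 3 / 2 * 2 ^ j := by linarith

theorem exists_mem_dyadicCube_mem_dyadicTriple {n : ℕ} {x y : EuclideanSpace ℝ (Fin n)}
    (hxy : x ≠ y) :
    ∃ j k, x ∈ dyadicCube n j k ∧ x ∈ dyadicTriple n j k ∧ y ∈ dyadicTriple n j k ∧
      (2 : ℝ) ^ j ≤ 2 * ‖x - y‖ := by
  obtain ⟨j, hle, hge⟩ := exists_zpow_two_mem_Icc (norm_pos_iff.mpr (sub_ne_zero.mpr hxy))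
  have hxQ := mem_dyadicCube_floor j x
  refine ⟨j, _, hxQ, mem_dyadicTriple_of_mem_dyadicCube hxQ ?_,
    mem_dyadicTriple_of_mem_dyadicCube hxQ ?_, hge⟩
  · simpa using zpow_nonneg zero_le_two j
  · rwa [norm_sub_rev]

theorem bilipschitz_of_reifenberg_flat_general
    {n D : ℕ} (E : Set (EuclideanSpace ℝ (Fin n)))
    (f : EuclideanSpace ℝ (Fin n) → EuclideanSpace ℝ (Fin D))
    (ρ εσ M : ℝ) (hεσ : 0 < εσ)
    (hρ : ρ < εσ / (12 * Real.sqrt n))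
    (A : ℤ → (Fin n → ℤ) →
      (EuclideanSpace ℝ (Fin n) →L[ℝ] EuclideanSpace ℝ (Fin D)) × EuclideanSpace ℝ (Fin D))
    (hA : ∀ (j : ℤ) (k : Fin n → ℤ), (dyadicCube n j k ∩ E).Nonempty →
      (∀ x ∈ dyadicTriple n j k ∩ E,
          ‖f x - ((A j k).1 x + (A j k).2)‖ < ρ * (Real.sqrt n * (2:ℝ) ^ j)) ∧
      (∀ v, εσ * ‖v‖ ≤ ‖(A j k).1 v‖) ∧ ‖(A j k).1‖ ≤ M) :
    ∀ x ∈ E, ∀ y ∈ E, x ≠ y →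
      εσ / 2 * ‖x - y‖ ≤ ‖f x - f y‖ ∧ ‖f x - f y‖ ≤ (M + εσ / 2) * ‖x - y‖ := by
  intro x hx y hy hxy
  obtain ⟨j, k, hxQ, hxT, hyT, hscale⟩ := exists_mem_dyadicCube_mem_dyadicTriple hxy
  obtain ⟨happrox, hlower, hupper⟩ := hA j k ⟨x, hxQ, hx⟩
  have herr : ρ * (Real.sqrt n * 2 ^ j) ≤ εσ / 6 * ‖x - y‖ := by
    have hρn : ρ * Real.sqrt n ≤ εσ / 12 :=
      mul_le_of_le_div₀ (by positivity) (Real.sqrt_nonneg n) (by rw [div_div]; exact hρ.le)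
    have h2j : (0 : ℝ) < 2 ^ j := zpow_pos two_pos j
    rw [← mul_assoc]
    nlinarith
  obtain ⟨hlo, hhi⟩ := norm_sub_bounds_of_affine_approx _ _ hlower hupper
    ((happrox x ⟨hxT, hx⟩).le.trans herr) ((happrox y ⟨hyT, hy⟩).le.trans herr)
  have hd := norm_nonneg (x - y)
  constructor <;> nlinarith

/-- A Reifenberg flat function (without the coherence condition on neighbouring
cubes) is bi-Lipschitz on `E`: if on every dyadic cube `Q` meeting `E` the function
`f` is `ρ·diam Q`-approximated on `3Q ∩ E` by an affine map whose linear part has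
smallest singular value at least `ε_σ` and operator norm at most `M`, and
`ρ < ε_σ/(12√n)`, then `(ε_σ/2)|x−y| ≤ |f(x)−f(y)| ≤ (M+ε_σ/2)|x−y|` on `E`.
Affine maps are encoded as pairs `(linear part, constant part)`. -/
theorem bilipschitz_of_reifenberg_flat
    {n D : ℕ} (E : Set (EuclideanSpace ℝ (Fin n)))
    (f : EuclideanSpace ℝ (Fin n) → EuclideanSpace ℝ (Fin D))
    (ρ εσ M : ℝ) (hεσ : 0 < εσ) (hM : 0 < M) (hρ0 : 0 ≤ ρ)
    (hρ : ρ < εσ / (12 * Real.sqrt n))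
    (A : ℤ → (Fin n → ℤ) →
      (EuclideanSpace ℝ (Fin n) →L[ℝ] EuclideanSpace ℝ (Fin D)) × EuclideanSpace ℝ (Fin D))
    (hA : ∀ (j : ℤ) (k : Fin n → ℤ), (dyadicCube n j k ∩ E).Nonempty →
      (∀ x ∈ dyadicTriple n j k ∩ E,
          ‖f x - ((A j k).1 x + (A j k).2)‖ < ρ * (Real.sqrt n * (2:ℝ) ^ j)) ∧
      (∀ v, εσ * ‖v‖ ≤ ‖(A j k).1 v‖) ∧ ‖(A j k).1‖ ≤ M) :
    ∀ x ∈ E, ∀ y ∈ E, x ≠ y →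
      εσ / 2 * ‖x - y‖ ≤ ‖f x - f y‖ ∧ ‖f x - f y‖ ≤ (M + εσ / 2) * ‖x - y‖ :=
  bilipschitz_of_reifenberg_flat_general E f ρ εσ M hεσ hρ A hA
end

section
/- Let E ⊆ ℝⁿ and let {A_Q} be a family of affine maps indexed by dyadic cubes Q intersecting E, such that |f(x) − A_Q(x)| < ρ·diam(Q) for all x ∈ 3Q ∩ E and |A_Q' − A_R'| < ρ whenever Q ∼ R (Q and R are adjacent cubes of the same sidelength, or one is the dyadic parent of the other). Then for all Q ∼ R intersecting E and all x ∈ ℝⁿ, |A_Q(x) − A_R(x)| ≤ C·ρ·(|x − x_Q| + diam Q), where x_Q is the center of Q and C depends only on n. -/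
open Metric

/-- `Q ∼ R`: the cubes are adjacent of the same sidelength, or one is the
dyadic parent of the other. A cube is coded as a pair `(j, k)` with sidelength
`2^j` and lower corner `2^j • k`. -/
def dyadicRel (n : ℕ) (Q R : ℤ × (Fin n → ℤ)) : Prop :=
  (Q.1 = R.1 ∧ ∀ i, |Q.2 i - R.2 i| ≤ 1) ∨
  (R.1 = Q.1 + 1 ∧ ∀ i, R.2 i = Int.fdiv (Q.2 i) 2) ∨
  (Q.1 = R.1 + 1 ∧ ∀ i, Q.2 i = Int.fdiv (R.2 i) 2)

/- The two affine maps `A_Q`, `A_R` both approximate `f` on `3Q ∩ 3R ∩ E`, which contains a point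
`x'` of `Q ∩ E`; so they differ by at most `ρ (diam Q + diam R)` at `x'`. Away from `x'` the
difference grows at the rate `‖A_Q' − A_R'‖ < ρ`, and `‖x − x'‖ ≤ ‖x − x_Q‖ + diam Q`. -/

theorem EuclideanSpace.norm_le_sqrt_card_mul {ι : Type*} [Fintype ι] (y : EuclideanSpace ℝ ι)
    {c : ℝ} (hc : 0 ≤ c) (h : ∀ i, |y i| ≤ c) : ‖y‖ ≤ √(Fintype.card ι) * c := by
  have hsum : ∑ i, ‖y i‖ ^ 2 ≤ Fintype.card ι * c ^ 2 := by
    calc ∑ i, ‖y i‖ ^ 2 ≤ ∑ _i : ι, c ^ 2 :=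
          Finset.sum_le_sum fun i _ => pow_le_pow_left₀ (norm_nonneg _) (h i) 2
      _ = Fintype.card ι * c ^ 2 := by simp
  calc ‖y‖ = √(∑ i, ‖y i‖ ^ 2) := EuclideanSpace.norm_eq y
    _ ≤ √(Fintype.card ι * c ^ 2) := Real.sqrt_le_sqrt hsum
    _ = √(Fintype.card ι) * c := by rw [Real.sqrt_mul (Nat.cast_nonneg _), Real.sqrt_sq hc]

theorem norm_affine_sub_affine_le {𝕜 E F : Type*} [NontriviallyNormedField 𝕜]
    [SeminormedAddCommGroup E] [NormedSpace 𝕜 E] [SeminormedAddCommGroup F] [NormedSpace 𝕜 F]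
    (L L' : E →L[𝕜] F) (b b' : F) (x x' : E) :
    ‖(L x + b) - (L' x + b')‖ ≤ ‖(L x' + b) - (L' x' + b')‖ + ‖L - L'‖ * ‖x - x'‖ := by
  have hsplit : (L x + b) - (L' x + b') = ((L x' + b) - (L' x' + b')) + (L - L') (x - x') := by
    simp only [sub_apply, map_sub]
    abel
  rw [hsplit]
  exact (norm_add_le _ _).trans (add_le_add_right ((L - L').le_opNorm _) _)

theorem Int.two_mul_fdiv_two_le_and_le_add_one (a : ℤ) :
    2 * a.fdiv 2 ≤ a ∧ a ≤ 2 * a.fdiv 2 + 1 := by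
  rw [Int.fdiv_eq_ediv_of_nonneg _ (by norm_num)]
  omega

section Dyadic

variable {n : ℕ}

theorem dyadicCenter_apply (j : ℤ) (k : Fin n → ℤ) (i : Fin n) :
    dyadicCenter n j k i = ((k i : ℝ) + 1 / 2) * (2 : ℝ) ^ j := rfl

theorem mem_dyadicTriple_iff {j : ℤ} {k : Fin n → ℤ} {x : EuclideanSpace ℝ (Fin n)} :
    x ∈ dyadicTriple n j k ↔
      ∀ i, ((k i : ℝ) - 1) * (2 : ℝ) ^ j ≤ x i ∧ x i ≤ ((k i : ℝ) + 2) * (2 : ℝ) ^ j := by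
  refine forall_congr' fun i => ?_
  rw [dyadicCenter_apply, abs_le]
  constructor <;> rintro ⟨h₁, h₂⟩ <;> constructor <;> linarith

theorem dyadicCube_subset_dyadicTriple_of_forall {j j' : ℤ} {k k' : Fin n → ℤ}
    (h : ∀ i, ((k' i : ℝ) - 1) * (2 : ℝ) ^ j' ≤ k i * (2 : ℝ) ^ j ∧
      ((k i : ℝ) + 1) * (2 : ℝ) ^ j ≤ ((k' i : ℝ) + 2) * (2 : ℝ) ^ j') :
    dyadicCube n j k ⊆ dyadicTriple n j' k' := fun _ hx => mem_dyadicTriple_iff.2 fun i =>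
  ⟨(h i).1.trans (hx i).1, (hx i).2.le.trans (h i).2⟩

theorem dyadicCube_subset_dyadicTriple (j : ℤ) (k : Fin n → ℤ) :
    dyadicCube n j k ⊆ dyadicTriple n j k :=
  dyadicCube_subset_dyadicTriple_of_forall fun i => by
    have : (0 : ℝ) < 2 ^ j := by positivity
    constructor <;> linarith

theorem dyadicCube_subset_dyadicTriple_of_dyadicRel {Q R : ℤ × (Fin n → ℤ)}
    (h : dyadicRel n Q R) : dyadicCube n Q.1 Q.2 ⊆ dyadicTriple n R.1 R.2 := by
  refine dyadicCube_subset_dyadicTriple_of_forall fun i => ?_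
  rcases h with ⟨hj, hk⟩ | ⟨hj, hk⟩ | ⟨hj, hk⟩
  · have hp : (0 : ℝ) < 2 ^ R.1 := by positivity
    have hki : |(Q.2 i : ℝ) - R.2 i| ≤ 1 := by exact_mod_cast hk i
    rw [abs_le] at hki
    rw [hj]
    constructor <;> nlinarith
  · have hp : (0 : ℝ) < 2 ^ Q.1 := by positivity
    obtain ⟨h₁, h₂⟩ := Int.two_mul_fdiv_two_le_and_le_add_one (Q.2 i)
    rw [← hk i] at h₁ h₂
    have c₁ : 2 * (R.2 i : ℝ) ≤ Q.2 i := by exact_mod_cast h₁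
    have c₂ : (Q.2 i : ℝ) ≤ 2 * R.2 i + 1 := by exact_mod_cast h₂
    rw [hj, zpow_add_one₀ two_ne_zero]
    constructor <;> nlinarith
  · have hp : (0 : ℝ) < 2 ^ R.1 := by positivity
    obtain ⟨h₁, h₂⟩ := Int.two_mul_fdiv_two_le_and_le_add_one (R.2 i)
    rw [← hk i] at h₁ h₂
    have c₁ : 2 * (Q.2 i : ℝ) ≤ R.2 i := by exact_mod_cast h₁
    have c₂ : (R.2 i : ℝ) ≤ 2 * Q.2 i + 1 := by exact_mod_cast h₂
    rw [hj, zpow_add_one₀ two_ne_zero]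
    constructor <;> nlinarith

theorem norm_sub_dyadicCenter_le {j : ℤ} {k : Fin n → ℤ} {x : EuclideanSpace ℝ (Fin n)}
    (hx : x ∈ dyadicCube n j k) : ‖x - dyadicCenter n j k‖ ≤ √n * (2 : ℝ) ^ j := by
  have hp : (0 : ℝ) < 2 ^ j := by positivity
  simpa using EuclideanSpace.norm_le_sqrt_card_mul (x - dyadicCenter n j k) hp.le fun i => by
    obtain ⟨h₁, h₂⟩ := hx i
    rw [PiLp.sub_apply, dyadicCenter_apply, abs_le]
    constructor <;> nlinarith

theorem zpow_le_two_mul_zpow_of_dyadicRel {Q R : ℤ × (Fin n → ℤ)} (h : dyadicRel n Q R) :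
    (2 : ℝ) ^ R.1 ≤ 2 * (2 : ℝ) ^ Q.1 := by
  have hle : R.1 ≤ Q.1 + 1 := by rcases h with ⟨h, -⟩ | ⟨h, -⟩ | ⟨h, -⟩ <;> omega
  calc (2 : ℝ) ^ R.1 ≤ 2 ^ (Q.1 + 1) := zpow_le_zpow_right₀ one_le_two hle
    _ = 2 * 2 ^ Q.1 := by rw [zpow_add_one₀ two_ne_zero, mul_comm]

end Dyadic

/-- If `f` is `ρ·diam Q`-approximated by affine maps `A_Q` on `3Q ∩ E` for cubes
meeting `E`, and the linear parts of `A_Q, A_R` differ by less than `ρ` for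
`Q ∼ R`, then `|A_Q(x) − A_R(x)| ≤ C·ρ·(|x − x_Q| + diam Q)` for all `x`, where
`C` depends only on `n`.  Affine maps are encoded as pairs
`(linear part, constant part)`. -/
theorem affine_maps_close_of_adjacent {n D : ℕ} :
    ∃ C : ℝ, 0 < C ∧
      ∀ (E : Set (EuclideanSpace ℝ (Fin n)))
        (f : EuclideanSpace ℝ (Fin n) → EuclideanSpace ℝ (Fin D)) (ρ : ℝ), 0 ≤ ρ →
      ∀ (A : ℤ → (Fin n → ℤ) →
        (EuclideanSpace ℝ (Fin n) →L[ℝ] EuclideanSpace ℝ (Fin D)) × EuclideanSpace ℝ (Fin D)),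
      (∀ (j : ℤ) (k : Fin n → ℤ), (dyadicCube n j k ∩ E).Nonempty →
        ∀ x ∈ dyadicTriple n j k ∩ E,
          ‖f x - ((A j k).1 x + (A j k).2)‖ < ρ * (Real.sqrt n * (2:ℝ) ^ j)) →
      (∀ Q R : ℤ × (Fin n → ℤ), dyadicRel n Q R →
        (dyadicCube n Q.1 Q.2 ∩ E).Nonempty → (dyadicCube n R.1 R.2 ∩ E).Nonempty →
          ‖(A Q.1 Q.2).1 - (A R.1 R.2).1‖ < ρ) →
      ∀ Q R : ℤ × (Fin n → ℤ), dyadicRel n Q R →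
        (dyadicCube n Q.1 Q.2 ∩ E).Nonempty → (dyadicCube n R.1 R.2 ∩ E).Nonempty →
        ∀ x : EuclideanSpace ℝ (Fin n),
          ‖((A Q.1 Q.2).1 x + (A Q.1 Q.2).2) - ((A R.1 R.2).1 x + (A R.1 R.2).2)‖
            ≤ C * ρ * (‖x - dyadicCenter n Q.1 Q.2‖ + Real.sqrt n * (2:ℝ) ^ Q.1) := by
  refine ⟨4, by norm_num, fun E f ρ hρ A happrox hlin Q R hQR hQ hR x => ?_⟩
  obtain ⟨x', hx'Q, hx'E⟩ := id hQ
  set c := dyadicCenter n Q.1 Q.2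
  have hfQ := happrox Q.1 Q.2 hQ x'
    ⟨dyadicCube_subset_dyadicTriple Q.1 Q.2 hx'Q, hx'E⟩
  have hfR := happrox R.1 R.2 hR x' ⟨dyadicCube_subset_dyadicTriple_of_dyadicRel hQR hx'Q, hx'E⟩
  have hL := hlin Q R hQR hQ hR
  have hat : ‖((A Q.1 Q.2).1 x' + (A Q.1 Q.2).2) - ((A R.1 R.2).1 x' + (A R.1 R.2).2)‖
      ≤ ρ * (√n * 2 ^ Q.1) + ρ * (√n * 2 ^ R.1) :=
    (norm_sub_le_norm_sub_add_norm_sub _ (f x') _).trans <| by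
      rw [norm_sub_rev]; exact add_le_add hfQ.le hfR.le
  have hdist : ‖x - x'‖ ≤ ‖x - c‖ + √n * 2 ^ Q.1 :=
    calc ‖x - x'‖ ≤ ‖x - c‖ + ‖x' - c‖ := norm_sub_le_norm_sub_add_norm_sub x c x' |>.trans_eq
          (by rw [norm_sub_rev c x'])
      _ ≤ ‖x - c‖ + √n * 2 ^ Q.1 := by gcongr; exact norm_sub_dyadicCenter_le hx'Q
  have hsize : ρ * (√n * 2 ^ R.1) ≤ ρ * (√n * (2 * 2 ^ Q.1)) := by
    gcongr; exact zpow_le_two_mul_zpow_of_dyadicRel hQR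
  calc _ ≤ _ := norm_affine_sub_affine_le _ _ _ _ x x'
    _ ≤ ρ * (√n * 2 ^ Q.1) + ρ * (√n * 2 ^ R.1) + ρ * (‖x - c‖ + √n * 2 ^ Q.1) := by
        gcongr
    _ ≤ 4 * ρ * (‖x - c‖ + √n * 2 ^ Q.1) := by
        have := mul_nonneg hρ (norm_nonneg (x - c))
        linarith
end

section
/- Let B₂ = B(x₂, r₂) ⊆ B(0,1) ⊆ ℝ^D with |x₂| + r₂ < 1. Define s(x) = x + x₂·(1−|x|)/(1−r₂) for r₂ < |x| ≤ 1 and s(x) = x + x₂ for |x| ≤ r₂. Then s maps B(0,1) to itself, equals the translation x ↦ x + x₂ on B(0, r₂), equals the identity on ∂B(0,1), and is C-bi-Lipschitz with C = (1 − |x₂|/(1−r₂))^{−1}. -/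
/-!
Write the map as `s(x) = x + φ(‖x‖) • x₂` with the profile `φ(t) = min 1 ((1 - t)/(1 - r₂))`,
which is `(1 - r₂)⁻¹`-Lipschitz. Hence `s` is a perturbation of the identity by a map of
Lipschitz constant `a = ‖x₂‖/(1 - r₂) < 1`, so `(1 - a)‖x - y‖ ≤ ‖s x - s y‖ ≤ (1 + a)‖x - y‖`,
and `1 + a ≤ (1 - a)⁻¹`. The profile vanishes on the unit sphere, and `φ(t)‖x₂‖ ≤ 1 - t`
keeps the closed unit ball invariant.
-/

open Metric

section RepositioningMap

variable {E : Type*} [SeminormedAddCommGroup E] [NormedSpace ℝ E]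

noncomputable def repositioningMap (v : E) (r : ℝ) (x : E) : E :=
  x + min 1 ((1 - ‖x‖) / (1 - r)) • v

variable {v : E} {r : ℝ}

theorem repositioningMap_eq_ite (hr : r < 1) (x : E) :
    repositioningMap v r x =
      if ‖x‖ ≤ r then x + v else x + ((1 - ‖x‖) / (1 - r)) • v := by
  have hr' : 0 < 1 - r := sub_pos.2 hr
  unfold repositioningMap
  split_ifs with hx
  · rw [min_eq_left ((one_le_div hr').2 (by linarith)), one_smul]
  · rw [min_eq_right ((div_le_one hr').2 (by linarith))]

theorem repositioningMap_of_norm_le (hr : r < 1) {x : E} (hx : ‖x‖ ≤ r) :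
    repositioningMap v r x = x + v := by
  rw [repositioningMap_eq_ite hr, if_pos hx]

theorem repositioningMap_of_norm_eq_one {x : E} (hx : ‖x‖ = 1) :
    repositioningMap v r x = x := by
  simp [repositioningMap, hx]

theorem repositioningMap_mapsTo_closedBall (hv : ‖v‖ ≤ 1 - r) :
    Set.MapsTo (repositioningMap v r) (closedBall 0 1) (closedBall 0 1) := by
  intro x hx
  rw [mem_closedBall_zero_iff] at hx ⊢
  have hφ₀ : 0 ≤ min 1 ((1 - ‖x‖) / (1 - r)) :=
    le_min zero_le_one (div_nonneg (by linarith) (by linarith [norm_nonneg v]))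
  calc ‖x + min 1 ((1 - ‖x‖) / (1 - r)) • v‖
      ≤ ‖x‖ + min 1 ((1 - ‖x‖) / (1 - r)) * ‖v‖ := by
        grw [norm_add_le, norm_smul, Real.norm_of_nonneg hφ₀]
    _ ≤ ‖x‖ + (1 - ‖x‖) / (1 - r) * ‖v‖ := by grw [min_le_right]
    _ = ‖x‖ + (1 - ‖x‖) * (‖v‖ / (1 - r)) := by ring
    _ ≤ ‖x‖ + (1 - ‖x‖) * 1 := by
        gcongr
        exact div_le_one_of_le₀ hv (by linarith [norm_nonneg v])
    _ = 1 := by ring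

theorem abs_min_one_div_sub_min_one_div_le (hr : r < 1) (s t : ℝ) :
    |min 1 ((1 - s) / (1 - r)) - min 1 ((1 - t) / (1 - r))| ≤ |s - t| / (1 - r) := by
  have hr' : 0 < 1 - r := sub_pos.2 hr
  calc |min 1 ((1 - s) / (1 - r)) - min 1 ((1 - t) / (1 - r))|
      ≤ max |1 - 1| |(1 - s) / (1 - r) - (1 - t) / (1 - r)| := abs_min_sub_min_le_max _ _ _ _
    _ = |t - s| / (1 - r) := by
        rw [sub_self, abs_zero, max_eq_right (abs_nonneg _), ← sub_div, abs_div,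
          abs_of_pos hr', sub_sub_sub_cancel_left]
    _ = |s - t| / (1 - r) := by rw [abs_sub_comm]

theorem norm_repositioningMap_sub_sub_le (hr : r < 1) (x y : E) :
    ‖(repositioningMap v r x - repositioningMap v r y) - (x - y)‖ ≤
      ‖v‖ / (1 - r) * ‖x - y‖ := by
  have hφ := abs_min_one_div_sub_min_one_div_le hr ‖x‖ ‖y‖
  calc ‖(repositioningMap v r x - repositioningMap v r y) - (x - y)‖
      = |min 1 ((1 - ‖x‖) / (1 - r)) - min 1 ((1 - ‖y‖) / (1 - r))| * ‖v‖ := by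
        rw [← Real.norm_eq_abs, ← norm_smul, repositioningMap, repositioningMap, sub_smul]
        congr 1
        abel
    _ ≤ ‖x - y‖ / (1 - r) * ‖v‖ := by
        grw [hφ, abs_norm_sub_norm_le]
        linarith [sub_pos.2 hr]
    _ = ‖v‖ / (1 - r) * ‖x - y‖ := by ring

theorem mul_norm_sub_le_norm_repositioningMap_sub (hr : r < 1) (x y : E) :
    (1 - ‖v‖ / (1 - r)) * ‖x - y‖ ≤ ‖repositioningMap v r x - repositioningMap v r y‖ := by
  have h := norm_repositioningMap_sub_sub_le (v := v) hr x y
  have h' := norm_le_insert' (x - y) (repositioningMap v r x - repositioningMap v r y)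
  rw [norm_sub_rev (x - y)] at h'
  linarith

theorem norm_repositioningMap_sub_le (hr : r < 1) (x y : E) :
    ‖repositioningMap v r x - repositioningMap v r y‖ ≤ (1 + ‖v‖ / (1 - r)) * ‖x - y‖ := by
  have h := norm_repositioningMap_sub_sub_le (v := v) hr x y
  have h' := norm_le_insert' (repositioningMap v r x - repositioningMap v r y) (x - y)
  linarith

end RepositioningMap

theorem one_add_le_inv_one_sub {a : ℝ} (ha : a < 1) : 1 + a ≤ (1 - a)⁻¹ := by
  rw [← one_div, le_div_iff₀ (by linarith)]
  nlinarith [sq_nonneg a]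

theorem repositioning_map_biLipschitz_general
    {D : ℕ} (x₂ : EuclideanSpace ℝ (Fin D)) (r₂ : ℝ)
    (h1 : ‖x₂‖ + r₂ < 1) :
    Set.MapsTo
        (fun x : EuclideanSpace ℝ (Fin D) =>
          if ‖x‖ ≤ r₂ then x + x₂ else x + ((1 - ‖x‖) / (1 - r₂)) • x₂)
        (closedBall (0 : EuclideanSpace ℝ (Fin D)) 1)
        (closedBall (0 : EuclideanSpace ℝ (Fin D)) 1) ∧
    (∀ x : EuclideanSpace ℝ (Fin D), ‖x‖ ≤ r₂ →
      (if ‖x‖ ≤ r₂ then x + x₂ else x + ((1 - ‖x‖) / (1 - r₂)) • x₂) = x + x₂) ∧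
    (∀ x : EuclideanSpace ℝ (Fin D), ‖x‖ = 1 →
      (if ‖x‖ ≤ r₂ then x + x₂ else x + ((1 - ‖x‖) / (1 - r₂)) • x₂) = x) ∧
    (∀ x ∈ closedBall (0 : EuclideanSpace ℝ (Fin D)) 1,
      ∀ y ∈ closedBall (0 : EuclideanSpace ℝ (Fin D)) 1,
        (1 - ‖x₂‖ / (1 - r₂)) * ‖x - y‖ ≤
          ‖(if ‖x‖ ≤ r₂ then x + x₂ else x + ((1 - ‖x‖) / (1 - r₂)) • x₂)
            - (if ‖y‖ ≤ r₂ then y + x₂ else y + ((1 - ‖y‖) / (1 - r₂)) • x₂)‖ ∧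
          ‖(if ‖x‖ ≤ r₂ then x + x₂ else x + ((1 - ‖x‖) / (1 - r₂)) • x₂)
            - (if ‖y‖ ≤ r₂ then y + x₂ else y + ((1 - ‖y‖) / (1 - r₂)) • x₂)‖ ≤
          (1 - ‖x₂‖ / (1 - r₂))⁻¹ * ‖x - y‖) := by
  have hr₂ : r₂ < 1 := by linarith [norm_nonneg x₂]
  have ha : ‖x₂‖ / (1 - r₂) < 1 := (div_lt_one (by linarith)).2 (by linarith)
  simp only [← repositioningMap_eq_ite hr₂]
  refine ⟨repositioningMap_mapsTo_closedBall (by linarith),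
    fun x hx => repositioningMap_of_norm_le hr₂ hx,
    fun x hx => repositioningMap_of_norm_eq_one hx,
    fun x _ y _ => ⟨mul_norm_sub_le_norm_repositioningMap_sub hr₂ x y, ?_⟩⟩
  grw [norm_repositioningMap_sub_le hr₂, one_add_le_inv_one_sub ha]

/-- The repositioning map: with `B(x₂,r₂) ⊆ B(0,1)`, the map
`s(x) = x + x₂·(1−|x|)/(1−r₂)` for `|x| > r₂` and `s(x) = x + x₂` for `|x| ≤ r₂`
sends `B(0,1)` to itself, is the translation by `x₂` on `B(0,r₂)`, the identity on
the unit sphere, and is `C`-bi-Lipschitz with `C = (1 − |x₂|/(1−r₂))⁻¹`. -/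
theorem repositioning_map_biLipschitz
    {D : ℕ} (x₂ : EuclideanSpace ℝ (Fin D)) (r₂ : ℝ) (hr : 0 < r₂)
    (h1 : ‖x₂‖ + r₂ < 1) :
    Set.MapsTo
        (fun x : EuclideanSpace ℝ (Fin D) =>
          if ‖x‖ ≤ r₂ then x + x₂ else x + ((1 - ‖x‖) / (1 - r₂)) • x₂)
        (closedBall (0 : EuclideanSpace ℝ (Fin D)) 1)
        (closedBall (0 : EuclideanSpace ℝ (Fin D)) 1) ∧
    (∀ x : EuclideanSpace ℝ (Fin D), ‖x‖ ≤ r₂ →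
      (if ‖x‖ ≤ r₂ then x + x₂ else x + ((1 - ‖x‖) / (1 - r₂)) • x₂) = x + x₂) ∧
    (∀ x : EuclideanSpace ℝ (Fin D), ‖x‖ = 1 →
      (if ‖x‖ ≤ r₂ then x + x₂ else x + ((1 - ‖x‖) / (1 - r₂)) • x₂) = x) ∧
    (∀ x ∈ closedBall (0 : EuclideanSpace ℝ (Fin D)) 1,
      ∀ y ∈ closedBall (0 : EuclideanSpace ℝ (Fin D)) 1,
        (1 - ‖x₂‖ / (1 - r₂)) * ‖x - y‖ ≤
          ‖(if ‖x‖ ≤ r₂ then x + x₂ else x + ((1 - ‖x‖) / (1 - r₂)) • x₂)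
            - (if ‖y‖ ≤ r₂ then y + x₂ else y + ((1 - ‖y‖) / (1 - r₂)) • x₂)‖ ∧
          ‖(if ‖x‖ ≤ r₂ then x + x₂ else x + ((1 - ‖x‖) / (1 - r₂)) • x₂)
            - (if ‖y‖ ≤ r₂ then y + x₂ else y + ((1 - ‖y‖) / (1 - r₂)) • x₂)‖ ≤
          (1 - ‖x₂‖ / (1 - r₂))⁻¹ * ‖x - y‖) :=
  repositioning_map_biLipschitz_general x₂ r₂ h1
end

section
/- Let h : ℝ^D → ℝ^D be a homeomorphism and let {Q_j} be pairwise disjoint sets such that each image h(Q_j) is convex, h is (1/L, L)-bi-Lipschitz on each Q_j, and h is (1/L, L)-bi-Lipschitz on (⋃Q_j)^c. Then for all x, y ∈ ℝ^D, (c/L)|x−y| ≤ |h(x)−h(y)| ≤ (CL)|x−y|, where c, C are absolute constants. -/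
open Set

open scoped RealInnerProductSpace

/-- A continuous real function on `[0,1]` that is nondecreasing on each set of a
countable cover of `[0,1]` satisfies `f 0 ≤ f 1`. -/
lemma key_mono (f : ℝ → ℝ) (hf : ContinuousOn f (Icc 0 1))
    (S : ℕ → Set ℝ) (hcov : Icc (0:ℝ) 1 ⊆ ⋃ n, S n)
    (hmono : ∀ n, ∀ s ∈ S n ∩ Icc 0 1, ∀ t ∈ S n ∩ Icc 0 1, s ≤ t → f s ≤ f t) :
    f 0 ≤ f 1 := by
  by_contra hlt
  push_neg at hlt
  -- for each level `v` in `(f 1, f 0)` pick the last time the value `v` is attained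
  have hE : ∀ v ∈ Ioo (f 1) (f 0), ∃ τ ∈ Icc (0:ℝ) 1, f τ = v ∧
      ∀ t ∈ Icc (0:ℝ) 1, τ < t → f t < v := by
    intro v hv
    set E : Set ℝ := Icc (0:ℝ) 1 ∩ f ⁻¹' {v} with hEdef
    have hEne : E.Nonempty := by
      obtain ⟨t, ht, hft⟩ := intermediate_value_Icc' (by norm_num : (0:ℝ) ≤ 1) hf
        ⟨hv.1.le, hv.2.le⟩
      exact ⟨t, ht, hft⟩
    have hEclosed : IsClosed E :=
      hf.preimage_isClosed_of_isClosed isClosed_Icc isClosed_singleton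
    have hEc : IsCompact E := isCompact_Icc.of_isClosed_subset hEclosed inter_subset_left
    have hmem : sSup E ∈ E := hEc.sSup_mem hEne
    refine ⟨sSup E, hmem.1, hmem.2, ?_⟩
    intro t ht hlt'
    by_contra hge
    push_neg at hge
    rcases eq_or_lt_of_le hge with heq | hltv
    · have : t ∈ E := ⟨ht, heq.symm⟩
      exact absurd (le_csSup hEc.bddAbove this) (not_le.mpr hlt')
    · obtain ⟨s, hs, hfs⟩ := intermediate_value_Icc' ht.2
        (hf.mono (Icc_subset_Icc ht.1 le_rfl)) ⟨hv.1.le, hltv.le⟩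
      have hsE : s ∈ E := ⟨⟨ht.1.trans hs.1, hs.2⟩, hfs⟩
      have := le_csSup hEc.bddAbove hsE
      have := hlt'.trans_le hs.1
      linarith
  -- choice: last crossing time and index of the covering set containing it
  choose τ hτmem hτval hτlt using fun v : Ioo (f 1) (f 0) => hE v v.2
  choose n hn using fun v : Ioo (f 1) (f 0) => mem_iUnion.mp (hcov (hτmem v))
  have key : ∀ v w : Ioo (f 1) (f 0), n v = n w → (v : ℝ) < w → False := by
    intro v w hnvw hvw
    rcases le_or_gt (τ w) (τ v) with hle | hlt'
    · have := hmono (n v) (τ w) ⟨hnvw ▸ hn w, hτmem w⟩ (τ v) ⟨hn v, hτmem v⟩ hle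
      rw [hτval v, hτval w] at this
      exact absurd this (not_le.mpr hvw)
    · have := hτlt v (τ w) (hτmem w) hlt'
      rw [hτval w] at this
      exact absurd this (not_lt.mpr hvw.le)
  have hinj : Function.Injective n := by
    intro v w hvw
    rcases lt_trichotomy (v : ℝ) (w : ℝ) with h | h | h
    · exact absurd (key v w hvw h) (by simp)
    · exact Subtype.ext h
    · exact absurd (key w v hvw.symm h) (by simp)
  have hcount : (Ioo (f 1) (f 0)).Countable :=
    Set.countable_iff_exists_injective.mpr ⟨n, hinj⟩
  have h0 := hcount.measure_zero (MeasureTheory.volume)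
  rw [Real.volume_Ioo] at h0
  rw [ENNReal.ofReal_eq_zero] at h0
  linarith

/-- A continuous curve into an inner product space that is `K`-Lipschitz on each
set of a countable cover of `[0,1]` moves its endpoints by at most `K`. -/
lemma key_norm {E : Type*} [NormedAddCommGroup E] [InnerProductSpace ℝ E]
    (φ : ℝ → E) (hφ : ContinuousOn φ (Icc 0 1)) (K : ℝ) (hK : 0 ≤ K)
    (S : ℕ → Set ℝ) (hcov : Icc (0:ℝ) 1 ⊆ ⋃ n, S n)
    (hlip : ∀ n, ∀ s ∈ S n ∩ Icc 0 1, ∀ t ∈ S n ∩ Icc 0 1,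
      ‖φ s - φ t‖ ≤ K * |s - t|) :
    ‖φ 1 - φ 0‖ ≤ K := by
  rcases eq_or_ne (φ 1) (φ 0) with h | h
  · simpa [h] using hK
  · set u : E := φ 1 - φ 0 with hu_def
    have hu : u ≠ 0 := sub_ne_zero.mpr h
    set e : E := ‖u‖⁻¹ • u with he_def
    have he : ‖e‖ = 1 := norm_smul_inv_norm hu
    set f : ℝ → ℝ := fun t => K * t - ⟪φ t - φ 0, e⟫ with hf_def
    have hfc : ContinuousOn f (Icc 0 1) := by
      apply ContinuousOn.sub
      · exact (continuous_const.mul continuous_id).continuousOn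
      · exact (hφ.sub continuousOn_const).inner continuousOn_const
    have hmono : ∀ m, ∀ s ∈ S m ∩ Icc 0 1, ∀ t ∈ S m ∩ Icc 0 1, s ≤ t → f s ≤ f t := by
      intro m s hs t ht hst
      have h1 : ⟪φ t - φ s, e⟫ ≤ K * (t - s) := by
        calc ⟪φ t - φ s, e⟫ ≤ ‖φ t - φ s‖ * ‖e‖ := real_inner_le_norm _ _
          _ = ‖φ t - φ s‖ := by rw [he, mul_one]
          _ ≤ K * |t - s| := hlip m t ht s hs
          _ = K * (t - s) := by rw [abs_of_nonneg (by linarith)]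
      have h2 : ⟪φ t - φ 0, e⟫ - ⟪φ s - φ 0, e⟫ = ⟪φ t - φ s, e⟫ := by
        rw [← inner_sub_left]
        congr 1
        abel
      simp only [hf_def]
      linarith
    have hkey := key_mono f hfc S hcov hmono
    have hinner : ⟪u, e⟫ = ‖u‖ := by
      rw [he_def, real_inner_smul_right, real_inner_self_eq_norm_mul_norm]
      field_simp
    have hf0 : f 0 = -⟪φ 0 - φ 0, e⟫ := by simp [hf_def]
    have hf1 : f 1 = K - ‖u‖ := by
      simp only [hf_def, mul_one]
      rw [← hu_def, hinner]
    rw [hf1] at hkey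
    rw [hf0] at hkey
    simp at hkey
    linarith

/-- Gluing bi-Lipschitz pieces: if a homeomorphism `h` of `ℝ^D` is
`(1/L, L)`-bi-Lipschitz on each of a countable pairwise disjoint family of sets
with convex images, and also on the complement of their union, then `h` is
globally bi-Lipschitz with comparable constants: there are absolute constants
`c, C > 0` with `(c/L)|x−y| ≤ |h(x)−h(y)| ≤ CL|x−y|` for all `x, y`. -/
theorem glue_biLipschitz_pieces :
    ∃ c C : ℝ, 0 < c ∧ 0 < C ∧
      ∀ (D : ℕ) (L : ℝ), 1 ≤ L →
      ∀ (h : EuclideanSpace ℝ (Fin D) ≃ₜ EuclideanSpace ℝ (Fin D))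
        (Q : ℕ → Set (EuclideanSpace ℝ (Fin D))),
        Pairwise (Function.onFun Disjoint Q) →
        (∀ j, Convex ℝ (h '' Q j)) →
        (∀ j, ∀ x ∈ Q j, ∀ y ∈ Q j,
          (1 / L) * ‖x - y‖ ≤ ‖h x - h y‖ ∧ ‖h x - h y‖ ≤ L * ‖x - y‖) →
        (∀ x ∉ ⋃ j, Q j, ∀ y ∉ ⋃ j, Q j,
          (1 / L) * ‖x - y‖ ≤ ‖h x - h y‖ ∧ ‖h x - h y‖ ≤ L * ‖x - y‖) →
        ∀ x y : EuclideanSpace ℝ (Fin D),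
          (c / L) * ‖x - y‖ ≤ ‖h x - h y‖ ∧ ‖h x - h y‖ ≤ C * L * ‖x - y‖ := by
  refine ⟨1, 1, one_pos, one_pos, ?_⟩
  intro D L hL h Q _ _ hQ hcomp x y
  have hL0 : (0 : ℝ) < L := lt_of_lt_of_le one_pos hL
  constructor
  · -- lower bound, via the segment in the target
    set φ : ℝ → EuclideanSpace ℝ (Fin D) :=
      fun t => h.symm (h x + t • (h y - h x)) with hφ_def
    have hφc : ContinuousOn φ (Icc 0 1) := by
      apply Continuous.continuousOn
      exact h.symm.continuous.comp (continuous_const.add (continuous_id.smul continuous_const))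
    set S : ℕ → Set ℝ := fun n =>
      Nat.rec {t : ℝ | φ t ∉ ⋃ j, Q j} (fun j _ => {t : ℝ | φ t ∈ Q j}) n with hS_def
    have hcov : Icc (0:ℝ) 1 ⊆ ⋃ n, S n := by
      intro t _
      by_cases hc : φ t ∈ ⋃ j, Q j
      · obtain ⟨j, hj⟩ := mem_iUnion.mp hc
        exact mem_iUnion.mpr ⟨j + 1, hj⟩
      · exact mem_iUnion.mpr ⟨0, hc⟩
    have hparam : ∀ s t : ℝ, ‖h (φ s) - h (φ t)‖ = |s - t| * ‖h x - h y‖ := by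
      intro s t
      have hs : h (φ s) = h x + s • (h y - h x) := h.apply_symm_apply _
      have ht : h (φ t) = h x + t • (h y - h x) := h.apply_symm_apply _
      rw [hs, ht]
      have : h x + s • (h y - h x) - (h x + t • (h y - h x)) = (s - t) • (h y - h x) := by
        rw [sub_smul]; abel
      rw [this, norm_smul, Real.norm_eq_abs, norm_sub_rev (h y) (h x)]
    have hlip : ∀ n, ∀ s ∈ S n ∩ Icc 0 1, ∀ t ∈ S n ∩ Icc 0 1,
        ‖φ s - φ t‖ ≤ (L * ‖h x - h y‖) * |s - t| := by
      intro n s hs t ht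
      have hb : (1 / L) * ‖φ s - φ t‖ ≤ ‖h (φ s) - h (φ t)‖ := by
        cases n with
        | zero => exact (hcomp (φ s) hs.1 (φ t) ht.1).1
        | succ j => exact (hQ j (φ s) hs.1 (φ t) ht.1).1
      rw [hparam s t] at hb
      rw [div_mul_eq_mul_div, one_mul, div_le_iff₀ hL0] at hb
      calc ‖φ s - φ t‖ ≤ |s - t| * ‖h x - h y‖ * L := hb
        _ = (L * ‖h x - h y‖) * |s - t| := by ring
    have hfin := key_norm φ hφc (L * ‖h x - h y‖)
      (mul_nonneg hL0.le (norm_nonneg _)) S hcov hlip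
    have hφ1 : φ 1 = y := by simp [hφ_def]
    have hφ0 : φ 0 = x := by simp [hφ_def]
    rw [hφ1, hφ0] at hfin
    rw [norm_sub_rev] at hfin
    rw [one_div, inv_mul_le_iff₀ hL0]
    exact hfin
  · -- upper bound, via the segment in the source
    set φ : ℝ → EuclideanSpace ℝ (Fin D) := fun t => x + t • (y - x) with hφ_def
    have hφc : Continuous φ := continuous_const.add (continuous_id.smul continuous_const)
    set S : ℕ → Set ℝ := fun n =>
      Nat.rec {t : ℝ | φ t ∉ ⋃ j, Q j} (fun j _ => {t : ℝ | φ t ∈ Q j}) n with hS_def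
    have hcov : Icc (0:ℝ) 1 ⊆ ⋃ n, S n := by
      intro t _
      by_cases hc : φ t ∈ ⋃ j, Q j
      · obtain ⟨j, hj⟩ := mem_iUnion.mp hc
        exact mem_iUnion.mpr ⟨j + 1, hj⟩
      · exact mem_iUnion.mpr ⟨0, hc⟩
    have hparam : ∀ s t : ℝ, ‖φ s - φ t‖ = |s - t| * ‖x - y‖ := by
      intro s t
      have : φ s - φ t = (s - t) • (y - x) := by
        simp only [hφ_def]
        rw [sub_smul]; abel
      rw [this, norm_smul, Real.norm_eq_abs, norm_sub_rev y x]
    have hlip : ∀ n, ∀ s ∈ S n ∩ Icc 0 1, ∀ t ∈ S n ∩ Icc 0 1,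
        ‖(fun t => h (φ t)) s - (fun t => h (φ t)) t‖ ≤ (L * ‖x - y‖) * |s - t| := by
      intro n s hs t ht
      have hb : ‖h (φ s) - h (φ t)‖ ≤ L * ‖φ s - φ t‖ := by
        cases n with
        | zero => exact (hcomp (φ s) hs.1 (φ t) ht.1).2
        | succ j => exact (hQ j (φ s) hs.1 (φ t) ht.1).2
      calc ‖h (φ s) - h (φ t)‖ ≤ L * ‖φ s - φ t‖ := hb
        _ = (L * ‖x - y‖) * |s - t| := by rw [hparam s t]; ring
    have hfin := key_norm (fun t => h (φ t))
      (h.continuous.comp hφc).continuousOn (L * ‖x - y‖)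
      (mul_nonneg hL0.le (norm_nonneg _)) S hcov hlip
    have hφ1 : φ 1 = y := by simp [hφ_def]
    have hφ0 : φ 0 = x := by simp [hφ_def]
    simp only [hφ1, hφ0] at hfin
    rw [norm_sub_rev] at hfin
    calc ‖h x - h y‖ ≤ L * ‖x - y‖ := hfin
      _ = 1 * L * ‖x - y‖ := by ring
end

section
/- Let f : ℝ^{n+m} → M be 1-Lipschitz into a metric space M, Q a cube of sidelength 1, and suppose that for all x, y on a common line intersecting 3Q^N with |x−y| ≥ α, the quotient |f(x)−f(y)|/|x−y| differs from a line-dependent constant σ(L) by at most ε′, and that σ(L) ≤ σ(L′) + ρ′ for all parallel lines L, L′ meeting Q. Then for all x, y ∈ Q with |x−y| ≥ α and all z with |z| ≤ 1, ||f(x+z)−f(y+z)| − |f(x)−f(y)|| ≤ 2ρ′′·|x−y|, where ρ′′ = ρ′ + ε′ is controlled by ρ′ and ε′. -/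
/-!
The pairs `(y, x)` and `(y + z, x + z)` lie on the parallel lines through `y` and `y + z` with
direction `x - y`, both of which meet `3Q ⊆ 3Q^N`. On each line the distance of the images is
`σ · ‖x - y‖` up to `ε' · ‖x - y‖`, and the two constants `σ` differ by at most `ρ'`.
-/

lemma abs_sub_le_of_approx_proportional {d₁ d₂ s₁ s₂ ε ρ L : ℝ}
    (h₁ : |d₁ - s₁ * L| ≤ ε * L) (h₂ : |d₂ - s₂ * L| ≤ ε * L)
    (hs₁₂ : s₁ ≤ s₂ + ρ) (hs₂₁ : s₂ ≤ s₁ + ρ) (hρ : 0 ≤ ρ) (hL : 0 ≤ L) :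
    |d₂ - d₁| ≤ 2 * (ρ + ε) * L := by
  have hs : |s₂ - s₁| ≤ ρ := abs_sub_le_iff.2 ⟨by linarith, by linarith⟩
  calc |d₂ - d₁| = |(d₂ - s₂ * L) - (d₁ - s₁ * L) + (s₂ - s₁) * L| := by ring_nf
    _ ≤ |d₂ - s₂ * L| + |d₁ - s₁ * L| + |s₂ - s₁| * L := by
        rw [← abs_of_nonneg hL, ← abs_mul, abs_of_nonneg hL]
        exact (abs_add_le _ _).trans (add_le_add_left (abs_sub _ _) _)
    _ ≤ ε * L + ε * L + ρ * L := by gcongr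
    _ ≤ 2 * (ρ + ε) * L := by nlinarith [mul_nonneg hρ hL]

section Box

variable {ι : Type*}

lemma exists_line_point_mem_box {p : EuclideanSpace ℝ ι} (v : EuclideanSpace ℝ ι) {a b : ℝ}
    (hp : ∀ i, a ≤ p i ∧ p i ≤ b) : ∃ t : ℝ, ∀ i, a ≤ (p + t • v) i ∧ (p + t • v) i ≤ b :=
  ⟨0, by simpa using hp⟩

lemma mem_box_mono {p : EuclideanSpace ℝ ι} {a b a' b' : ℝ} (hp : ∀ i, a ≤ p i ∧ p i ≤ b)
    (ha : a' ≤ a) (hb : b ≤ b') : ∀ i, a' ≤ p i ∧ p i ≤ b' :=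
  fun i => ⟨ha.trans (hp i).1, (hp i).2.trans hb⟩

lemma add_mem_box_of_norm_le [Fintype ι] {p z : EuclideanSpace ℝ ι} {a b r : ℝ}
    (hp : ∀ i, a ≤ p i ∧ p i ≤ b) (hz : ‖z‖ ≤ r) :
    ∀ i, a - r ≤ (p + z) i ∧ (p + z) i ≤ b + r := by
  intro i
  have hzi : |z i| ≤ r := (PiLp.norm_apply_le z i).trans hz
  rw [PiLp.add_apply]
  constructor <;> linarith [(hp i).1, (hp i).2, abs_le.1 hzi]

end Box

theorem difference_quotient_translation_invariance_general
    {n m : ℕ} {M : Type*} [MetricSpace M]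
    (f : EuclideanSpace ℝ (Fin (n + m)) → M)
    (N : ℕ) (α ε' ρ' : ℝ) (hα : 0 < α) (hρ' : 0 ≤ ρ')
    (σ : EuclideanSpace ℝ (Fin (n + m)) → EuclideanSpace ℝ (Fin (n + m)) → ℝ)
    (hσ1 : ∀ p v : EuclideanSpace ℝ (Fin (n + m)), v ≠ 0 →
      (∃ t : ℝ, ∀ i, -((2:ℝ) ^ N) ≤ (p + t • v) i ∧ (p + t • v) i ≤ (2:ℝ) ^ (N + 1)) →
      ∀ s t : ℝ, α ≤ ‖(p + s • v) - (p + t • v)‖ →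
        |dist (f (p + s • v)) (f (p + t • v)) - σ p v * ‖(p + s • v) - (p + t • v)‖|
          ≤ ε' * ‖(p + s • v) - (p + t • v)‖)
    (hσ2 : ∀ p q v : EuclideanSpace ℝ (Fin (n + m)), v ≠ 0 →
      (∃ t : ℝ, ∀ i, (-1:ℝ) ≤ (p + t • v) i ∧ (p + t • v) i ≤ 2) →
      (∃ t : ℝ, ∀ i, (-1:ℝ) ≤ (q + t • v) i ∧ (q + t • v) i ≤ 2) →
      σ p v ≤ σ q v + ρ') :
    ∀ x : EuclideanSpace ℝ (Fin (n + m)), (∀ i, 0 ≤ x i ∧ x i ≤ 1) →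
    ∀ y : EuclideanSpace ℝ (Fin (n + m)), (∀ i, 0 ≤ y i ∧ y i ≤ 1) →
      α ≤ ‖x - y‖ →
      ∀ z : EuclideanSpace ℝ (Fin (n + m)), ‖z‖ ≤ 1 →
        |dist (f (x + z)) (f (y + z)) - dist (f x) (f y)|
          ≤ 2 * (ρ' + ε') * ‖x - y‖ := by
  intro x hx y hy hxy z hz
  set v := x - y
  have hv : v ≠ 0 := norm_pos_iff.mp (hα.trans_le hxy)
  have hy₃ : ∀ i, (-1:ℝ) ≤ y i ∧ y i ≤ 2 := mem_box_mono hy (by norm_num) (by norm_num)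
  have hyz₃ : ∀ i, (-1:ℝ) ≤ (y + z) i ∧ (y + z) i ≤ 2 := by
    simpa [one_add_one_eq_two] using add_mem_box_of_norm_le hy hz
  have hN₁ : -((2:ℝ) ^ N) ≤ -1 := neg_le_neg (one_le_pow₀ one_le_two)
  have hN₂ : (2:ℝ) ≤ 2 ^ (N + 1) := le_self_pow₀ one_le_two N.succ_ne_zero
  have hx_line : y + v = x := add_sub_cancel y x
  have hxz_line : y + z + v = x + z := by rw [add_right_comm, hx_line]
  have h_yx := hσ1 y v hv (exists_line_point_mem_box v (mem_box_mono hy₃ hN₁ hN₂)) 1 0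
  have h_yzxz := hσ1 (y + z) v hv (exists_line_point_mem_box v (mem_box_mono hyz₃ hN₁ hN₂)) 1 0
  simp only [one_smul, zero_smul, add_zero, hx_line, hxz_line,
    add_sub_add_right_eq_sub] at h_yx h_yzxz
  exact abs_sub_le_of_approx_proportional (h_yx hxy) (h_yzxz hxy)
    (hσ2 _ _ v hv (exists_line_point_mem_box v hy₃) (exists_line_point_mem_box v hyz₃))
    (hσ2 _ _ v hv (exists_line_point_mem_box v hyz₃) (exists_line_point_mem_box v hy₃))
    hρ' (norm_nonneg v)

/-- Translation invariance of difference quotients (eq. (shift-f) of Corollary 5.4):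
let `f : ℝ^{n+m} → M` be `1`-Lipschitz, `Q = [0,1]^{n+m}`.  Suppose that every
line `L` meeting `3Q^N` carries a constant `σ(L)` (depending only on the line,
encoded here as `σ p v` for the line through `p` with direction `v`) such that
the difference quotient of `f` at `α`-separated points of `L` differs from
`σ(L)` by at most `ε′`, and that `σ(L) ≤ σ(L′) + ρ′` for parallel lines `L, L′`
meeting `3Q`.  Then difference quotients change by at most `2(ρ′+ε′)·|x−y|`
under a common translation of the endpoints by `z`, `|z| ≤ 1`. -/
theorem difference_quotient_translation_invariance
    {n m : ℕ} {M : Type*} [MetricSpace M]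
    (f : EuclideanSpace ℝ (Fin (n + m)) → M) (hf : LipschitzWith 1 f)
    (N : ℕ) (α ε' ρ' : ℝ) (hα : 0 < α) (hε' : 0 ≤ ε') (hρ' : 0 ≤ ρ')
    (σ : EuclideanSpace ℝ (Fin (n + m)) → EuclideanSpace ℝ (Fin (n + m)) → ℝ)
    (hσ1 : ∀ p v : EuclideanSpace ℝ (Fin (n + m)), v ≠ 0 →
      (∃ t : ℝ, ∀ i, -((2:ℝ) ^ N) ≤ (p + t • v) i ∧ (p + t • v) i ≤ (2:ℝ) ^ (N + 1)) →
      ∀ s t : ℝ, α ≤ ‖(p + s • v) - (p + t • v)‖ →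
        |dist (f (p + s • v)) (f (p + t • v)) - σ p v * ‖(p + s • v) - (p + t • v)‖|
          ≤ ε' * ‖(p + s • v) - (p + t • v)‖)
    (hσ2 : ∀ p q v : EuclideanSpace ℝ (Fin (n + m)), v ≠ 0 →
      (∃ t : ℝ, ∀ i, (-1:ℝ) ≤ (p + t • v) i ∧ (p + t • v) i ≤ 2) →
      (∃ t : ℝ, ∀ i, (-1:ℝ) ≤ (q + t • v) i ∧ (q + t • v) i ≤ 2) →
      σ p v ≤ σ q v + ρ')
    (hN : (1:ℝ) ≤ (2:ℝ) ^ N) :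
    ∀ x : EuclideanSpace ℝ (Fin (n + m)), (∀ i, 0 ≤ x i ∧ x i ≤ 1) →
    ∀ y : EuclideanSpace ℝ (Fin (n + m)), (∀ i, 0 ≤ y i ∧ y i ≤ 1) →
      α ≤ ‖x - y‖ →
      ∀ z : EuclideanSpace ℝ (Fin (n + m)), ‖z‖ ≤ 1 →
        |dist (f (x + z)) (f (y + z)) - dist (f x) (f y)|
          ≤ 2 * (ρ' + ε') * ‖x - y‖ :=
  difference_quotient_translation_invariance_general f N α ε' ρ' hα hρ' σ hσ1 hσ2
end

section
/- Let M be a metric space, E ⊆ ℝⁿ × ℝᵐ a set measurable with respect to the product of Hausdorff measures ℋⁿ_M × ℋᵐ on M × ℝᵐ after applying h, and h : E → M × ℝᵐ of the form h(x,y) = (f(x,y), y) which is κ-bi-Lipschitz on E with ℋⁿ(f(E)) ≤ 1. Write E_y = E ∩ (ℝⁿ × {y}). Then ∫∫ ℋⁿ(f(E_y) ∩ f(E_z)) dℋᵐ(y) dℋᵐ(z) ≥ (ℋⁿ×ℋᵐ(h(E)))² / ℋⁿ(f(E)). In particular there exists y′ ∈ ℝᵐ with ∫ ℋⁿ(f(E_{y′})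 ∩ f(E_z)) dℋᵐ(z) ≥ (ℋⁿ×ℋᵐ(h(E)))² / ℋⁿ(f(E)). -/
open Set MeasureTheory
open scoped ENNReal

/-! Let `H = h(E) ⊆ M × ℝᵐ` and `g(x) = ℋᵐ(H_x)` be the measure of its vertical slices. Since
`f(E_y) = {x | (x, y) ∈ H}`, Fubini turns the double integral of `ℋⁿ(f(E_y) ∩ f(E_z))` into
`∫ g² dℋⁿ`, while `ℋⁿ × ℋᵐ(H) = ∫ g dℋⁿ`; Cauchy–Schwarz on `f(E)` compares the two. The point `y'`
is one where the inner integral is at least its mean over the unit cube, which has volume one. -/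

theorem Set.image_setOf_snd_eq {α β γ : Type*} (f : α × β → γ) (E : Set (α × β)) (y : β) :
    f '' {p | p ∈ E ∧ p.2 = y} = {x | (x, y) ∈ (fun p => (f p, p.2)) '' E} := by
  ext x
  simp only [mem_image, mem_ofPred_eq, Prod.mk.injEq]
  constructor
  · rintro ⟨p, ⟨hp, rfl⟩, rfl⟩
    exact ⟨p, hp, rfl, rfl⟩
  · rintro ⟨p, hp, rfl, rfl⟩
    exact ⟨p, ⟨hp, rfl⟩, rfl⟩

theorem ENNReal.sq_lintegral_le_lintegral_sq_mul_measure_univ {α : Type*} [MeasurableSpace α]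
    (μ : Measure α) {g : α → ℝ≥0∞} (hg : AEMeasurable g μ) :
    (∫⁻ x, g x ∂μ) ^ 2 ≤ (∫⁻ x, g x ^ 2 ∂μ) * μ univ := by
  have hHolder := ENNReal.lintegral_mul_le_Lp_mul_Lq μ Real.HolderConjugate.two_two hg
    (aemeasurable_const (b := (1 : ℝ≥0∞)))
  simp only [Pi.mul_apply, mul_one, ENNReal.rpow_two, one_pow, lintegral_one] at hHolder
  calc (∫⁻ x, g x ∂μ) ^ 2
      ≤ ((∫⁻ x, g x ^ 2 ∂μ) ^ (1 / 2 : ℝ) * μ univ ^ (1 / 2 : ℝ)) ^ 2 := by gcongr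
    _ = (∫⁻ x, g x ^ 2 ∂μ) * μ univ := by
      rw [mul_pow, ← ENNReal.rpow_natCast, ← ENNReal.rpow_natCast, ← ENNReal.rpow_mul,
        ← ENNReal.rpow_mul]
      norm_num

namespace MeasureTheory

variable {X Y : Type*} [MeasurableSpace X] [MeasurableSpace Y]

theorem Measure.prod_restrict_apply_of_fst_mem {μ : Measure X} {ν : Measure Y} [SFinite ν]
    {H : Set (X × Y)} (hH : MeasurableSet H) {U : Set X} (hHU : ∀ p ∈ H, p.1 ∈ U) :
    (μ.restrict U).prod ν H = μ.prod ν H := by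
  rw [Measure.prod_apply hH, Measure.prod_apply hH]
  refine setLIntegral_eq_of_support_subset fun x hx => ?_
  obtain ⟨y, hy⟩ := nonempty_of_measure_ne_zero hx
  exact hHU _ hy

variable (μ : Measure X) (ν : Measure Y) [SFinite μ] [SFinite ν] {H : Set (X × Y)}

/-- Fubini on `X × Y × Y`: both sides are the measure of
`{(x, y, z) | (x, y) ∈ H ∧ (x, z) ∈ H}`. -/
theorem lintegral_lintegral_measure_inter_slices (ν' : Measure Y) [SFinite ν']
    (hH : MeasurableSet H) :
    ∫⁻ y, ∫⁻ z, μ ({x | (x, y) ∈ H} ∩ {x | (x, z) ∈ H}) ∂ν' ∂ν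
      = ∫⁻ x, ν (Prod.mk x ⁻¹' H) * ν' (Prod.mk x ⁻¹' H) ∂μ := by
  set T : Set (X × Y × Y) := {p | (p.1, p.2.1) ∈ H ∧ (p.1, p.2.2) ∈ H}
  have hT : MeasurableSet T := (hH.preimage (by fun_prop)).inter (hH.preimage (by fun_prop))
  calc ∫⁻ y, ∫⁻ z, μ ({x | (x, y) ∈ H} ∩ {x | (x, z) ∈ H}) ∂ν' ∂ν
      = ∫⁻ w, μ ((fun x => (x, w)) ⁻¹' T) ∂ν.prod ν' :=
        (lintegral_prod _ (measurable_measure_prodMk_right hT).aemeasurable).symm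
    _ = μ.prod (ν.prod ν') T := (Measure.prod_apply_symm hT).symm
    _ = ∫⁻ x, ν.prod ν' ((Prod.mk x ⁻¹' H) ×ˢ (Prod.mk x ⁻¹' H)) ∂μ := Measure.prod_apply hT
    _ = ∫⁻ x, ν (Prod.mk x ⁻¹' H) * ν' (Prod.mk x ⁻¹' H) ∂μ := by
      simp only [Measure.prod_prod]

theorem setLIntegral_lintegral_measure_inter_slices (hH : MeasurableSet H) {s : Set Y}
    (hs : ∀ x, Prod.mk x ⁻¹' H ⊆ s) :
    ∫⁻ y in s, ∫⁻ z, μ ({x | (x, y) ∈ H} ∩ {x | (x, z) ∈ H}) ∂ν ∂ν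
      = ∫⁻ x, ν (Prod.mk x ⁻¹' H) ^ 2 ∂μ := by
  simp only [lintegral_lintegral_measure_inter_slices μ (ν.restrict s) ν hH,
    Measure.restrict_eq_self ν (hs _), sq]

theorem sq_measure_prod_le_setLIntegral_lintegral_measure_inter_slices_mul
    (hH : MeasurableSet H) {s : Set Y} (hs : ∀ x, Prod.mk x ⁻¹' H ⊆ s) :
    μ.prod ν H ^ 2
      ≤ (∫⁻ y in s, ∫⁻ z, μ ({x | (x, y) ∈ H} ∩ {x | (x, z) ∈ H}) ∂ν ∂ν) * μ univ := by
  rw [setLIntegral_lintegral_measure_inter_slices μ ν hH hs, Measure.prod_apply hH]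
  exact ENNReal.sq_lintegral_le_lintegral_sq_mul_measure_univ μ
    (measurable_measure_prodMk_left hH).aemeasurable

theorem setLIntegral_lintegral_measure_inter_slices_le
    (hH : MeasurableSet H) {s : Set Y} (hs : ∀ x, Prod.mk x ⁻¹' H ⊆ s) :
    ∫⁻ y in s, ∫⁻ z, μ ({x | (x, y) ∈ H} ∩ {x | (x, z) ∈ H}) ∂ν ∂ν ≤ ν s ^ 2 * μ univ := by
  rw [setLIntegral_lintegral_measure_inter_slices μ ν hH hs, ← lintegral_const]
  exact lintegral_mono fun x => by gcongr; exact hs x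

end MeasureTheory

theorem slice_overlap_integral_lower_bound_general
    {n m : ℕ} {M : Type*} [MetricSpace M] [MeasurableSpace M] [BorelSpace M]
    (f : (Fin n → ℝ) × (Fin m → ℝ) → M)
    (E : Set ((Fin n → ℝ) × (Fin m → ℝ)))
    (hmeas : MeasurableSet ((fun p => (f p, p.2)) '' E))
    (hE2 : ∀ p ∈ E, p.2 ∈ Icc (0 : Fin m → ℝ) 1)
    (hfE : μH[n] (f '' E) ≤ 1) :
    (∫⁻ y in Icc (0 : Fin m → ℝ) 1, ∫⁻ z,
        μH[n] ((f '' {p | p ∈ E ∧ p.2 = y}) ∩ (f '' {p | p ∈ E ∧ p.2 = z}))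
          ∂(volume : Measure (Fin m → ℝ)) ∂(volume : Measure (Fin m → ℝ)))
      ≥ (((μH[n] : Measure M).prod (volume : Measure (Fin m → ℝ)))
            ((fun p => (f p, p.2)) '' E)) ^ 2 / μH[n] (f '' E) ∧
    ∃ y' ∈ Icc (0 : Fin m → ℝ) 1,
      (∫⁻ z, μH[n] ((f '' {p | p ∈ E ∧ p.2 = y'}) ∩ (f '' {p | p ∈ E ∧ p.2 = z}))
          ∂(volume : Measure (Fin m → ℝ)))
        ≥ (((μH[n] : Measure M).prod (volume : Measure (Fin m → ℝ)))
            ((fun p => (f p, p.2)) '' E)) ^ 2 / μH[n] (f '' E) := by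
  set H := (fun p => (f p, p.2)) '' E
  -- `μH[n]` need not be s-finite, so Fubini is applied to its restriction to a measurable
  -- hull of `f '' E`.
  obtain ⟨U, hfEU, -, hUeq⟩ := exists_measurable_superset (μH[n] : Measure M) (f '' E)
  set ν := (μH[n] : Measure M).restrict U
  have hν : ν univ = μH[n] (f '' E) := by rw [Measure.restrict_apply_univ, hUeq]
  have : IsFiniteMeasure ν := ⟨hν ▸ hfE.trans_lt ENNReal.one_lt_top⟩
  have hHU : ∀ p ∈ H, p.1 ∈ U := by
    rintro _ ⟨p, hp, rfl⟩
    exact hfEU (mem_image_of_mem f hp)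
  have hHIcc : ∀ x, Prod.mk x ⁻¹' H ⊆ Icc 0 1 := by
    rintro x y ⟨p, hp, hpy⟩
    obtain ⟨rfl, rfl⟩ := Prod.mk.inj hpy
    exact hE2 p hp
  have hslices : ∀ y z, μH[n] ((f '' {p | p ∈ E ∧ p.2 = y}) ∩ (f '' {p | p ∈ E ∧ p.2 = z}))
      = ν ({x | (x, y) ∈ H} ∩ {x | (x, z) ∈ H}) := fun y z => by
    rw [image_setOf_snd_eq, image_setOf_snd_eq, Measure.restrict_eq_self]
    exact fun x hx => hHU (x, y) hx.1
  simp_rw [hslices]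
  rw [← hν, ← Measure.prod_restrict_apply_of_fst_mem hmeas hHU]
  have hvolIcc : volume (Icc (0 : Fin m → ℝ) 1) = 1 := by simp [Real.volume_Icc_pi]
  have hbound := ENNReal.div_le_of_le_mul
    (sq_measure_prod_le_setLIntegral_lintegral_measure_inter_slices_mul ν volume hmeas hHIcc)
  have hfinite := (setLIntegral_lintegral_measure_inter_slices_le ν volume hmeas hHIcc).trans_lt
    (by rw [hvolIcc, one_pow, one_mul]; exact measure_lt_top ν univ)
  obtain ⟨y', hy', hle⟩ := exists_setLAverage_le (by simp [hvolIcc])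
    measurableSet_Icc.nullMeasurableSet hfinite.ne
  rw [setLAverage_eq, hvolIcc, div_one] at hle
  exact ⟨hbound, y', hy', hbound.trans hle⟩

/-- Fubini/Cauchy–Schwarz estimate for slices (Lemma 6.6): if
`h(x,y) = (f(x,y), y)` is `κ`-bi-Lipschitz on `E ⊆ ℝⁿ × [0,1]ᵐ`, `h(E)` is
measurable in `M × ℝᵐ` and `ℋⁿ(f(E)) ≤ 1`, then
`∫∫ ℋⁿ(f(E_y) ∩ f(E_z)) dy dz ≥ (ℋⁿ×ℋᵐ(h(E)))² / ℋⁿ(f(E))`, and in particular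
some `y′` realizes the same lower bound for the inner integral. -/
theorem slice_overlap_integral_lower_bound
    {n m : ℕ} {M : Type*} [MetricSpace M] [MeasurableSpace M] [BorelSpace M]
    (f : (Fin n → ℝ) × (Fin m → ℝ) → M)
    (E : Set ((Fin n → ℝ) × (Fin m → ℝ))) (κ : ℝ) (hκ : 0 < κ)
    (hbil : ∀ p ∈ E, ∀ q ∈ E,
      κ * dist p q ≤ dist (f p, p.2) (f q, q.2) ∧ dist (f p, p.2) (f q, q.2) ≤ dist p q)
    (hmeas : MeasurableSet ((fun p => (f p, p.2)) '' E))
    (hE2 : ∀ p ∈ E, p.2 ∈ Icc (0 : Fin m → ℝ) 1)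
    (hfE : μH[n] (f '' E) ≤ 1) :
    (∫⁻ y in Icc (0 : Fin m → ℝ) 1, ∫⁻ z,
        μH[n] ((f '' {p | p ∈ E ∧ p.2 = y}) ∩ (f '' {p | p ∈ E ∧ p.2 = z}))
          ∂(volume : Measure (Fin m → ℝ)) ∂(volume : Measure (Fin m → ℝ)))
      ≥ (((μH[n] : Measure M).prod (volume : Measure (Fin m → ℝ)))
            ((fun p => (f p, p.2)) '' E)) ^ 2 / μH[n] (f '' E) ∧
    ∃ y' ∈ Icc (0 : Fin m → ℝ) 1,
      (∫⁻ z, μH[n] ((f '' {p | p ∈ E ∧ p.2 = y'}) ∩ (f '' {p | p ∈ E ∧ p.2 = z}))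
          ∂(volume : Measure (Fin m → ℝ)))
        ≥ (((μH[n] : Measure M).prod (volume : Measure (Fin m → ℝ)))
            ((fun p => (f p, p.2)) '' E)) ^ 2 / μH[n] (f '' E) :=
  slice_overlap_integral_lower_bound_general f E hmeas hE2 hfE
end

section
/- Let f : [0,1]^{n+m} → ℝⁿ be a C¹ map whose derivative has rank at most n−1 at every point (so its n-dimensional Jacobian Jⁿ_f, the product of the n largest singular values of Df, vanishes everywhere). Then ℋ^{n,m}_∞(f, [0,1]^{n+m}) = 0, where ℋ^{n,m}_∞(f,A) = inf Σ_j ℋⁿ_∞(f(Q_j))·side(Q_j)^m over countable partitions of A into cubes. -/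
/-!
Partition the unit cube into `N^(n+m)` grid cubes of side `s = 1/N`. On a grid cube `Q` with
corner `a`, uniform continuity of `Df` makes `f` agree with the affine map
`x ↦ f a + Df(a)(x - a)` up to `ε s`, and the image of `Q` under that map lies in the ball of
radius `L s` (`L` a bound for `‖Df‖`) of the subspace `range Df(a)`, of dimension at most `n - 1`.
A volume packing argument in that subspace covers the ball by `≲ (L / ε)^(n-1)` balls of radius
`ε s`, so `ℋⁿ_∞(f(Q)) ≲ ε sⁿ`, and summing `ℋⁿ_∞(f(Q)) · sᵐ` over the grid gives `≲ ε`.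
-/

open Set MeasureTheory
open scoped ENNReal

/-- The `n`-dimensional Hausdorff content of a set: the infimum of `∑ rⱼⁿ` over
countable covers by balls of radii `rⱼ`. -/
noncomputable def hausdorffContent (n : ℕ) {X : Type*} [PseudoMetricSpace X]
    (A : Set X) : ℝ≥0∞ :=
  ⨅ (c : ℕ → X) (r : ℕ → ℝ) (_ : A ⊆ ⋃ j, Metric.ball (c j) (r j)),
    ∑' j, ENNReal.ofReal (r j ^ n)

/-- The half-open axis-parallel cube with lower corner `a` and sidelength `s`. -/
def halfOpenCube {d : ℕ} (a : Fin d → ℝ) (s : ℝ) : Set (Fin d → ℝ) :=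
  {x | ∀ i, a i ≤ x i ∧ x i < a i + s}

/-- The `(n,m)`-Hausdorff content of `(f, A)`: the infimum of
`∑ ℋⁿ_∞(f(Qⱼ))·side(Qⱼ)ᵐ` over countable measure-theoretic partitions of `A`
into disjoint cubes `Qⱼ`. -/
noncomputable def hausdorffContentNM (n m : ℕ) {M : Type*} [PseudoMetricSpace M]
    (f : (Fin (n + m) → ℝ) → M) (A : Set (Fin (n + m) → ℝ)) : ℝ≥0∞ :=
  ⨅ (a : ℕ → Fin (n + m) → ℝ) (s : ℕ → ℝ)
    (_ : ∀ j, 0 ≤ s j)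
    (_ : ∀ j, halfOpenCube (a j) (s j) ⊆ A)
    (_ : Pairwise (Function.onFun Disjoint fun j => halfOpenCube (a j) (s j)))
    (_ : volume (A \ ⋃ j, halfOpenCube (a j) (s j)) = 0),
    ∑' j, hausdorffContent n (f '' halfOpenCube (a j) (s j)) * ENNReal.ofReal (s j ^ m)

open Metric
open scoped NNReal

section Packing

variable {E : Type*} [NormedAddCommGroup E] [NormedSpace ℝ E] [FiniteDimensional ℝ E]

theorem card_le_of_isSeparated_of_subset_closedBall {t : Finset E} {R : ℝ} {ε : ℝ≥0}
    (hR : 0 ≤ R) (hε : 0 < ε) (ht : (t : Set E) ⊆ closedBall 0 R)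
    (hsep : IsSeparated ε (t : Set E)) :
    (t.card : ℝ) ≤ ((2 * R + ε) / ε) ^ Module.finrank ℝ E := by
  borelize E
  set μ : Measure E := Measure.addHaar
  have hε' : (0 : ℝ) < ε / 2 := by positivity
  have hdisj : (t : Set E).PairwiseDisjoint fun c => ball c (ε / 2) := by
    intro c hc d hd hcd
    refine ball_disjoint_ball ?_
    have hcd : (ε : ℝ≥0∞) < edist c d := hsep hc hd hcd
    rw [edist_nndist, ENNReal.coe_lt_coe, ← NNReal.coe_lt_coe, coe_nndist] at hcd
    linarith
  have hsub : ⋃ c ∈ t, ball c (ε / 2) ⊆ ball 0 (R + ε / 2) := by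
    refine iUnion₂_subset fun c hc => ball_subset_ball' ?_
    have hcR := ht hc
    rw [mem_closedBall, dist_zero_right] at hcR
    rw [dist_zero_right]
    linarith
  have hvol : (t.card : ℝ≥0∞) * ENNReal.ofReal ((ε / 2) ^ Module.finrank ℝ E) * μ (ball 0 1) ≤
      ENNReal.ofReal ((R + ε / 2) ^ Module.finrank ℝ E) * μ (ball 0 1) := by
    calc (t.card : ℝ≥0∞) * ENNReal.ofReal ((ε / 2) ^ Module.finrank ℝ E) * μ (ball 0 1)
        = ∑ c ∈ t, μ (ball c (ε / 2)) := by
          simp [Measure.addHaar_ball_of_pos μ _ hε', mul_assoc]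
      _ = μ (⋃ c ∈ t, ball c (ε / 2)) :=
          (measure_biUnion_finset hdisj fun _ _ => measurableSet_ball).symm
      _ ≤ μ (ball 0 (R + ε / 2)) := measure_mono hsub
      _ = ENNReal.ofReal ((R + ε / 2) ^ Module.finrank ℝ E) * μ (ball 0 1) :=
          Measure.addHaar_ball_of_pos μ _ (by positivity)
  rw [ENNReal.mul_le_mul_iff_left (measure_ball_pos μ 0 one_pos).ne'
    measure_ball_lt_top.ne, ← ENNReal.ofReal_natCast, ← ENNReal.ofReal_mul (by positivity),
    ENNReal.ofReal_le_ofReal_iff (by positivity), ← le_div_iff₀ (by positivity), ← div_pow] at hvol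
  calc (t.card : ℝ) ≤ ((R + ε / 2) / (ε / 2)) ^ Module.finrank ℝ E := hvol
    _ = ((2 * R + ε) / ε) ^ Module.finrank ℝ E := by congr 1; field_simp

theorem exists_finset_card_le_subset_iUnion_closedBall {A : Set E} {R : ℝ} {ε : ℝ≥0}
    (hR : 0 ≤ R) (hε : 0 < ε) (hA : A ⊆ closedBall 0 R) :
    ∃ t : Finset E, (t.card : ℝ) ≤ ((2 * R + ε) / ε) ^ Module.finrank ℝ E ∧
      A ⊆ ⋃ c ∈ t, closedBall c ε := by
  set B := ((2 * R + ε) / ε) ^ Module.finrank ℝ E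
  have hpack : ∀ C ⊆ A, IsSeparated ε C → C.encard ≤ ⌊B⌋₊ := by
    intro C hCA hC
    by_contra! hlt
    obtain ⟨D, hDC, hD⟩ := exists_subset_encard_eq (Order.add_one_le_of_lt hlt)
    have hDfin : D.Finite := finite_of_encard_eq_coe hD
    have hcard := card_le_of_isSeparated_of_subset_closedBall (t := hDfin.toFinset) hR hε
      (by simpa using hDC.trans (hCA.trans hA)) (by simpa using hC.subset hDC)
    rw [hDfin.encard_eq_coe_toFinset_card, ← Nat.cast_add_one, Nat.cast_inj] at hD
    rw [hD, Nat.cast_add_one] at hcard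
    exact (Nat.lt_floor_add_one B).not_ge hcard
  have hfin : packingNumber ε A ≠ ⊤ :=
    ne_top_of_le_ne_top (ENat.natCast_ne_top ⌊B⌋₊) (iSup₂_le fun C hCA => iSup_le (hpack C hCA))
  have hC := hpack _ maximalSeparatedSet_subset isSeparated_maximalSeparatedSet
  have hCfin := finite_of_encard_le_coe hC
  refine ⟨hCfin.toFinset, ?_, ?_⟩
  · rw [hCfin.encard_eq_coe_toFinset_card, Nat.cast_le] at hC
    exact (Nat.cast_le.2 hC).trans (Nat.floor_le (by positivity))
  · simpa [isCover_iff_subset_iUnion_closedBall] using isCover_maximalSeparatedSet hfin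

end Packing

section HausdorffContent

variable {X : Type*} [PseudoMetricSpace X] [Nonempty X] {n : ℕ}

theorem hausdorffContent_le_tsum {ι : Type*} [Countable ι] (hn : n ≠ 0) {S : Set X}
    (c : ι → X) (r : ι → ℝ) (hS : S ⊆ ⋃ i, ball (c i) (r i)) :
    hausdorffContent n S ≤ ∑' i, ENNReal.ofReal (r i ^ n) := by
  obtain ⟨g, hg⟩ := exists_injective_nat ι
  obtain ⟨x₀⟩ := ‹Nonempty X›
  refine iInf_le_of_le (Function.extend g c fun _ => x₀) <|
    iInf_le_of_le (Function.extend g r 0) <| iInf_le_of_le ?_ (le_of_eq ?_)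
  · refine hS.trans (iUnion_subset fun i => subset_iUnion_of_subset (g i) ?_)
    rw [hg.extend_apply, hg.extend_apply]
  · have hzero : (fun ρ : ℝ => ENNReal.ofReal (ρ ^ n)) ∘ (0 : ℕ → ℝ) = 0 := by
      funext; simp [hn]
    simp_rw [Function.apply_extend (fun ρ : ℝ => ENNReal.ofReal (ρ ^ n)), hzero]
    exact tsum_extend_zero hg _

theorem hausdorffContent_le_card_mul {ι : Type*} [Fintype ι] (hn : n ≠ 0) {S : Set X}
    (c : ι → X) (r : ℝ) (hS : S ⊆ ⋃ i, ball (c i) r) :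
    hausdorffContent n S ≤ Fintype.card ι * ENNReal.ofReal (r ^ n) :=
  (hausdorffContent_le_tsum hn c (fun _ => r) hS).trans_eq (by simp [tsum_fintype])

theorem hausdorffContent_empty (hn : n ≠ 0) : hausdorffContent n (∅ : Set X) = 0 :=
  nonpos_iff_eq_zero.1 <| by
    simpa using hausdorffContent_le_card_mul hn (Empty.elim : Empty → X) 0 (empty_subset _)

end HausdorffContent

section HalfOpenCube

variable {d : ℕ}

theorem halfOpenCube_eq_pi (a : Fin d → ℝ) (s : ℝ) :
    halfOpenCube a s = univ.pi fun i => Ico (a i) (a i + s) := by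
  ext x; simp [halfOpenCube]

theorem halfOpenCube_zero (hd : d ≠ 0) (a : Fin d → ℝ) : halfOpenCube a 0 = ∅ :=
  eq_empty_of_forall_notMem fun x hx => by
    obtain ⟨hle, hlt⟩ := hx ⟨0, Nat.pos_of_ne_zero hd⟩
    linarith

theorem convex_halfOpenCube (a : Fin d → ℝ) (s : ℝ) : Convex ℝ (halfOpenCube a s) := by
  rw [halfOpenCube_eq_pi]
  exact convex_pi fun _ _ => convex_Ico _ _

theorem mem_halfOpenCube_self (a : Fin d → ℝ) {s : ℝ} (hs : 0 < s) : a ∈ halfOpenCube a s :=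
  fun _ => ⟨le_rfl, lt_add_of_pos_right _ hs⟩

theorem halfOpenCube_subset_closedBall (a : Fin d → ℝ) {s : ℝ} (hs : 0 ≤ s) :
    halfOpenCube a s ⊆ closedBall a s := fun x hx =>
  (dist_pi_le_iff hs).2 fun i => by
    rw [Real.dist_eq, abs_le]
    constructor <;> linarith [hx i]

end HalfOpenCube

theorem hausdorffContentNM_le_tsum {n m : ℕ} {M : Type*} [PseudoMetricSpace M] [Nonempty M]
    (hn : n ≠ 0) (f : (Fin (n + m) → ℝ) → M) {A : Set (Fin (n + m) → ℝ)} {ι : Type*}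
    [Countable ι] (a : ι → Fin (n + m) → ℝ) (s : ι → ℝ) (hs : ∀ i, 0 ≤ s i)
    (hA : ∀ i, halfOpenCube (a i) (s i) ⊆ A)
    (hdisj : Pairwise (Function.onFun Disjoint fun i => halfOpenCube (a i) (s i)))
    (hnull : volume (A \ ⋃ i, halfOpenCube (a i) (s i)) = 0) :
    hausdorffContentNM n m f A ≤
      ∑' i, hausdorffContent n (f '' halfOpenCube (a i) (s i)) * ENNReal.ofReal (s i ^ m) := by
  obtain ⟨g, hg⟩ := exists_injective_nat ι
  -- indices outside the range of `g` get the cube `halfOpenCube 0 0 = ∅`, which contributes `0`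
  set p : ℕ → (Fin (n + m) → ℝ) × ℝ := Function.extend g (fun i => (a i, s i)) fun _ => (0, 0)
  have hcube : ∀ j,
      halfOpenCube (p j).1 (p j).2 = ⋃ (i) (_ : g i = j), halfOpenCube (a i) (s i) := by
    intro j
    by_cases hj : ∃ i, g i = j
    · obtain ⟨i, rfl⟩ := hj
      simp [p, hg.extend_apply, hg.eq_iff]
    · simp only [p, Function.extend_apply' _ _ _ hj, halfOpenCube_zero (show n + m ≠ 0 by omega)]
      simp_all
  refine iInf_le_of_le (fun j => (p j).1) <| iInf_le_of_le (fun j => (p j).2) <|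
    iInf_le_of_le ?_ <| iInf_le_of_le ?_ <| iInf_le_of_le ?_ <| iInf_le_of_le ?_ (le_of_eq ?_)
  · intro j
    by_cases hj : ∃ i, g i = j
    · obtain ⟨i, rfl⟩ := hj
      simp [p, hg.extend_apply, hs i]
    · simp [p, Function.extend_apply' _ _ _ hj]
  · intro j
    rw [hcube j]
    exact iUnion₂_subset fun i _ => hA i
  · intro j j' hjj'
    simp only [Function.onFun, hcube, disjoint_iUnion_left, disjoint_iUnion_right]
    rintro i rfl i' rfl
    exact hdisj (ne_of_apply_ne g hjj')
  · simpa [iUnion_congr hcube, iUnion_comm (ι := ℕ)] using hnull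
  · set F : (Fin (n + m) → ℝ) × ℝ → ℝ≥0∞ := fun q =>
      hausdorffContent n (f '' halfOpenCube q.1 q.2) * ENNReal.ofReal (q.2 ^ m)
    have hzero : F ∘ (fun _ => (0, 0)) = (0 : ℕ → ℝ≥0∞) := by
      funext
      simp [F, halfOpenCube_zero (show n + m ≠ 0 by omega), hausdorffContent_empty hn]
    change ∑' j, F (p j) = _
    simp_rw [p, Function.apply_extend F, hzero]
    exact tsum_extend_zero hg _

section Grid

variable {d : ℕ}

noncomputable def gridCorner (N : ℕ) (g : Fin d → Fin N) : Fin d → ℝ := fun i => (g i : ℝ) / N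

variable {N : ℕ}

theorem mem_halfOpenCube_gridCorner_iff (hN : 0 < N) {g : Fin d → Fin N} {x : Fin d → ℝ} :
    x ∈ halfOpenCube (gridCorner N g) (N : ℝ)⁻¹ ↔ ∀ i, ⌊x i * N⌋ = (g i : ℤ) := by
  have hN' : (0 : ℝ) < N := Nat.cast_pos.2 hN
  refine forall_congr' fun i => ?_
  rw [Int.floor_eq_iff, Int.cast_natCast, gridCorner, div_add' _ _ _ hN'.ne', div_le_iff₀ hN',
    lt_div_iff₀ hN', inv_mul_cancel₀ hN'.ne']

theorem halfOpenCube_gridCorner_subset_Icc (hN : 0 < N) (g : Fin d → Fin N) :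
    halfOpenCube (gridCorner N g) (N : ℝ)⁻¹ ⊆ Icc 0 1 := by
  intro x hx
  rw [mem_halfOpenCube_gridCorner_iff hN] at hx
  have hN' : (0 : ℝ) < N := Nat.cast_pos.2 hN
  refine ⟨fun i => ?_, fun i => ?_⟩
  · have hxN := Int.floor_nonneg.1 (hx i ▸ Int.natCast_nonneg _)
    exact nonneg_of_mul_nonneg_left hxN hN'
  · have hxN := Int.floor_lt.1 ((hx i).trans_lt (Int.ofNat_lt.2 (g i).isLt))
    rw [Int.cast_natCast] at hxN
    exact (lt_of_mul_lt_mul_right (by simpa using hxN) hN'.le).le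

theorem pairwise_disjoint_halfOpenCube_gridCorner (hN : 0 < N) :
    Pairwise (Function.onFun Disjoint fun g : Fin d → Fin N =>
      halfOpenCube (gridCorner N g) (N : ℝ)⁻¹) := by
  intro g g' hgg'
  refine disjoint_left.2 fun x hx hx' => hgg' (funext fun i => Fin.ext ?_)
  rw [mem_halfOpenCube_gridCorner_iff hN] at hx hx'
  exact_mod_cast (hx i).symm.trans (hx' i)

theorem volume_Icc_diff_iUnion_halfOpenCube_gridCorner (hN : 0 < N) :
    volume (Icc (0 : Fin d → ℝ) 1 \ ⋃ g : Fin d → Fin N,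
      halfOpenCube (gridCorner N g) (N : ℝ)⁻¹) = 0 := by
  have hN' : (0 : ℝ) < N := Nat.cast_pos.2 hN
  have hint : interior (Icc (0 : Fin d → ℝ) 1) ⊆ ⋃ g : Fin d → Fin N,
      halfOpenCube (gridCorner N g) (N : ℝ)⁻¹ := by
    rw [← pi_univ_Icc, interior_pi_set finite_univ]
    intro x hx
    simp only [Pi.zero_apply, Pi.one_apply, interior_Icc, mem_pi, mem_univ, mem_Ioo,
      forall_const] at hx
    have hfloor : ∀ i, 0 ≤ ⌊x i * N⌋ := fun i => Int.floor_nonneg.2 (by nlinarith [hx i])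
    have hlt : ∀ i, (⌊x i * N⌋.toNat) < N := fun i => by
      rw [Int.toNat_lt (hfloor i), Int.floor_lt]
      push_cast
      nlinarith [hx i]
    refine mem_iUnion.2 ⟨fun i => ⟨_, hlt i⟩, (mem_halfOpenCube_gridCorner_iff hN).2 fun i => ?_⟩
    simp [Int.toNat_of_nonneg (hfloor i)]
  refine measure_mono_null (fun x hx => ?_) ((convex_Icc 0 1).addHaar_frontier volume)
  rw [frontier, isClosed_Icc.closure_eq]
  exact ⟨hx.1, fun h => hx.2 (hint h)⟩

end Grid

theorem hausdorffContentNM_Icc_le_sum_gridCorner {n m : ℕ} {M : Type*} [PseudoMetricSpace M]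
    [Nonempty M] (hn : n ≠ 0) (f : (Fin (n + m) → ℝ) → M) {N : ℕ} (hN : 0 < N) :
    hausdorffContentNM n m f (Icc 0 1) ≤ ∑ g : Fin (n + m) → Fin N,
      hausdorffContent n (f '' halfOpenCube (gridCorner N g) (N : ℝ)⁻¹) *
        ENNReal.ofReal ((N : ℝ)⁻¹ ^ m) :=
  (hausdorffContentNM_le_tsum hn f _ (fun _ => (N : ℝ)⁻¹) (fun _ => by positivity)
    (halfOpenCube_gridCorner_subset_Icc hN) (pairwise_disjoint_halfOpenCube_gridCorner hN)
    (volume_Icc_diff_iUnion_halfOpenCube_gridCorner hN)).trans_eq (tsum_fintype _)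

section LowRank

variable {E F : Type*} [NormedAddCommGroup E] [NormedSpace ℝ E] [NormedAddCommGroup F]
  [NormedSpace ℝ F] {n : ℕ}

theorem hausdorffContent_le_of_subset_near_submodule (V : Submodule ℝ F)
    (hV : Module.rank ℝ V < n) {S : Set F} (b : F) {R ρ : ℝ} (hR : 0 ≤ R) (hρ : 0 < ρ)
    (hS : ∀ y ∈ S, ∃ v ∈ V, ‖v‖ ≤ R ∧ dist y (b + v) ≤ ρ) :
    hausdorffContent n S ≤ ENNReal.ofReal (3 ^ n * (2 * R + ρ) ^ (n - 1) * ρ) := by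
  have : FiniteDimensional ℝ V :=
    Module.rank_lt_aleph0_iff.1 (hV.trans Cardinal.natCast_lt_aleph0)
  have hk : Module.finrank ℝ V < n := by
    rwa [← Module.finrank_eq_rank, Nat.cast_lt] at hV
  obtain ⟨t, ht, hcover⟩ := exists_finset_card_le_subset_iUnion_closedBall (E := V)
    (A := closedBall 0 R) (ε := ⟨ρ, hρ.le⟩) hR hρ subset_rfl
  change (t.card : ℝ) ≤ ((2 * R + ρ) / ρ) ^ Module.finrank ℝ V at ht
  change closedBall 0 R ⊆ ⋃ c ∈ t, closedBall c ρ at hcover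
  have hS' : S ⊆ ⋃ c : t, ball (b + ((c : V) : F)) (3 * ρ) := by
    intro y hy
    obtain ⟨v, hv, hvR, hyv⟩ := hS y hy
    obtain ⟨c, hc, hvc⟩ := mem_iUnion₂.1 <|
      hcover (show (⟨v, hv⟩ : V) ∈ closedBall 0 R by simpa using hvR)
    refine mem_iUnion.2 ⟨⟨c, hc⟩, ?_⟩
    rw [mem_closedBall] at hvc
    rw [mem_ball]
    calc dist y (b + (c : F)) ≤ dist y (b + v) + dist (b + v) (b + (c : F)) := dist_triangle _ _ _
      _ ≤ ρ + ρ := by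
        rw [dist_add_left]
        exact add_le_add hyv hvc
      _ < 3 * ρ := by linarith
  obtain ⟨k, rfl⟩ := Nat.exists_eq_add_one_of_ne_zero (n := n) (by omega)
  calc hausdorffContent (k + 1) S ≤ t.card * ENNReal.ofReal ((3 * ρ) ^ (k + 1)) := by
        simpa using hausdorffContent_le_card_mul (by omega) _ _ hS'
    _ ≤ ENNReal.ofReal (((2 * R + ρ) / ρ) ^ k) * ENNReal.ofReal ((3 * ρ) ^ (k + 1)) := by
        rw [← ENNReal.ofReal_natCast]
        gcongr
        exact ht.trans (pow_le_pow_right₀ ((one_le_div hρ).2 (by linarith)) (by omega))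
    _ = ENNReal.ofReal (3 ^ (k + 1) * (2 * R + ρ) ^ (k + 1 - 1) * ρ) := by
        rw [← ENNReal.ofReal_mul (by positivity), Nat.add_sub_cancel, div_pow, mul_pow, pow_succ ρ]
        field_simp

theorem hausdorffContent_image_le_of_rank_fderiv_lt {f : E → F} {Q : Set E} {a : E}
    {s L ε : ℝ} (hQ : Convex ℝ Q) (ha : a ∈ Q) (hQs : Q ⊆ closedBall a s) (hs : 0 < s)
    (hε : 0 < ε) (hf : ∀ x ∈ Q, DifferentiableAt ℝ f x) (hL : ‖fderiv ℝ f a‖ ≤ L)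
    (hnear : ∀ x ∈ Q, ‖fderiv ℝ f x - fderiv ℝ f a‖ ≤ ε)
    (hrank : (fderiv ℝ f a).toLinearMap.rank < n) :
    hausdorffContent n (f '' Q) ≤ ENNReal.ofReal (3 ^ n * (2 * L + ε) ^ (n - 1) * ε * s ^ n) := by
  have hL0 : 0 ≤ L := (norm_nonneg _).trans hL
  refine (hausdorffContent_le_of_subset_near_submodule _ hrank (f a) (R := L * s) (ρ := ε * s)
    (by positivity) (by positivity) ?_).trans_eq ?_
  · rintro _ ⟨x, hx, rfl⟩
    have hxa : ‖x - a‖ ≤ s := by simpa [dist_eq_norm] using hQs hx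
    refine ⟨fderiv ℝ f a (x - a), LinearMap.mem_range_self _ _, ?_, ?_⟩
    · exact (fderiv ℝ f a).le_of_opNorm_le_of_le hL hxa
    · rw [dist_eq_norm, sub_add_eq_sub_sub]
      calc ‖f x - f a - fderiv ℝ f a (x - a)‖ ≤ ε * ‖x - a‖ :=
            hQ.norm_image_sub_le_of_norm_fderiv_le' hf hnear ha hx
        _ ≤ ε * s := by gcongr
  · have hn : n ≠ 0 := by rintro rfl; simp at hrank
    obtain ⟨k, rfl⟩ := Nat.exists_eq_add_one_of_ne_zero hn
    rw [Nat.add_sub_cancel, show 2 * (L * s) + ε * s = (2 * L + ε) * s by ring, mul_pow]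
    congr 1
    ring

end LowRank

theorem hausdorffContentNM_Icc_le_of_rank_fderiv_lt {F : Type*} [NormedAddCommGroup F]
    [NormedSpace ℝ F] {n m : ℕ} {f : (Fin (n + m) → ℝ) → F} (hf : ContDiff ℝ 1 f)
    (hrank : ∀ x ∈ Icc (0 : Fin (n + m) → ℝ) 1, (fderiv ℝ f x).toLinearMap.rank < n) {L : ℝ}
    (hL : ∀ x ∈ Icc (0 : Fin (n + m) → ℝ) 1, ‖fderiv ℝ f x‖ ≤ L) {ε : ℝ} (hε : 0 < ε) :
    hausdorffContentNM n m f (Icc 0 1) ≤ ENNReal.ofReal (3 ^ n * (2 * L + ε) ^ (n - 1) * ε) := by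
  have hn : n ≠ 0 := by
    rintro rfl
    simpa using hrank 0 (left_mem_Icc.2 zero_le_one)
  have hL0 : 0 ≤ L := (norm_nonneg _).trans (hL 0 (left_mem_Icc.2 zero_le_one))
  obtain ⟨δ, hδ, hDf⟩ := uniformContinuousOn_iff.1
    (isCompact_Icc.uniformContinuousOn_of_continuous
      (hf.continuous_fderiv one_ne_zero).continuousOn) ε hε
  obtain ⟨N, hNδ⟩ := exists_nat_one_div_lt hδ
  set s : ℝ := ((N + 1 : ℕ) : ℝ)⁻¹
  have hs : 0 < s := by positivity
  have hcube : ∀ g : Fin (n + m) → Fin (N + 1),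
      hausdorffContent n (f '' halfOpenCube (gridCorner (N + 1) g) s) ≤
        ENNReal.ofReal (3 ^ n * (2 * L + ε) ^ (n - 1) * ε * s ^ n) := by
    intro g
    have hQ := halfOpenCube_gridCorner_subset_Icc N.succ_pos g
    have ha := hQ (mem_halfOpenCube_self _ hs)
    refine hausdorffContent_image_le_of_rank_fderiv_lt (convex_halfOpenCube _ _)
      (mem_halfOpenCube_self _ hs) (halfOpenCube_subset_closedBall _ hs.le) hs hε
      (fun x _ => hf.differentiable one_ne_zero x) (hL _ ha) (fun x hx => ?_) (hrank _ ha)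
    rw [← dist_eq_norm]
    refine (hDf x (hQ hx) _ ha ((halfOpenCube_subset_closedBall _ hs.le hx).trans_lt ?_)).le
    simpa [s] using hNδ
  calc hausdorffContentNM n m f (Icc 0 1)
      ≤ ∑ g : Fin (n + m) → Fin (N + 1),
          hausdorffContent n (f '' halfOpenCube (gridCorner (N + 1) g) s) *
            ENNReal.ofReal (s ^ m) :=
        hausdorffContentNM_Icc_le_sum_gridCorner hn f N.succ_pos
    _ ≤ ∑ _g : Fin (n + m) → Fin (N + 1),
          ENNReal.ofReal (3 ^ n * (2 * L + ε) ^ (n - 1) * ε * s ^ n) * ENNReal.ofReal (s ^ m) := by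
        gcongr with g
        exact hcube g
    _ = ENNReal.ofReal (3 ^ n * (2 * L + ε) ^ (n - 1) * ε) := by
        rw [Finset.sum_const, Finset.card_univ, Fintype.card_fun, Fintype.card_fin,
          Fintype.card_fin, nsmul_eq_mul, ← ENNReal.ofReal_mul (by positivity),
          ← ENNReal.ofReal_natCast, ← ENNReal.ofReal_mul (by positivity)]
        congr 1
        simp only [s, inv_pow, Nat.cast_pow]
        field_simp
        ring

/-- A `C¹` map `f : ℝ^{n+m} → ℝⁿ` whose derivative has rank at most `n − 1`
everywhere (so its `n`-dimensional Jacobian vanishes identically) has zero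
`(n,m)`-Hausdorff content on the unit cube. -/
theorem hausdorffContentNM_eq_zero_of_rank_lt
    {n m : ℕ} (f : (Fin (n + m) → ℝ) → (Fin n → ℝ)) (hf : ContDiff ℝ 1 f)
    (hrank : ∀ x, LinearMap.rank (fderiv ℝ f x).toLinearMap < (n : Cardinal)) :
    hausdorffContentNM n m f (Icc (0 : Fin (n + m) → ℝ) 1) = 0 := by
  obtain ⟨L, hL⟩ := isCompact_Icc.exists_bound_of_continuousOn
    (hf.continuous_fderiv one_ne_zero).continuousOn
  have hlim : Filter.Tendsto (fun ε => ENNReal.ofReal (3 ^ n * (2 * L + ε) ^ (n - 1) * ε))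
      (nhdsWithin 0 (Ioi 0)) (nhds 0) := by
    have hcont : Continuous fun ε : ℝ => ENNReal.ofReal (3 ^ n * (2 * L + ε) ^ (n - 1) * ε) :=
      ENNReal.continuous_ofReal.comp (by fun_prop)
    simpa using (hcont.tendsto 0).mono_left nhdsWithin_le_nhds
  exact nonpos_iff_eq_zero.1 (ge_of_tendsto hlim (eventually_nhdsWithin_of_forall fun ε hε =>
    hausdorffContentNM_Icc_le_of_rank_fderiv_lt hf (fun x _ => hrank x) hL hε))
end
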